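/- arXiv:1406.5711 — 8 statements merged into one kernel-verified Lean document; each statement's English description precedes it below -/
import Mathlib

section
/- The two-parameter R-matrix R = s·Σ_i e_{ii}⊗e_{ii} + rs·Σ_{i>j} e_{ii}⊗e_{jj} + Σ_{i<j} e_{ii}⊗e_{jj} + (s−r)·Σ_{i>j} e_{ij}⊗e_{ji} on V⊗V, where V = ℂⁿ, satisfies the quantum Yang–Baxter equation R₁₂R₁₃R₂₃ = R₂₃R₁₃R₁₂ on V⊗V⊗V. -/
open Matrix

/-- The two-parameter R-matrix on `V ⊗ V`, `V = ℂⁿ`, written in the basis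
`e^i ⊗ e^j` indexed by pairs `(i,j)`:
`R = s Σ_i e_{ii}⊗e_{ii} + rs Σ_{i>j} e_{ii}⊗e_{jj} + Σ_{i<j} e_{ii}⊗e_{jj}
 + (s-r) Σ_{i>j} e_{ij}⊗e_{ji}`. -/
noncomputable def Rmat (n : ℕ) (r s : ℂ) :
    Matrix (Fin n × Fin n) (Fin n × Fin n) ℂ := fun p q =>
  (if q = p then (if p.1 = p.2 then s else if p.2 < p.1 then r * s else 1) else 0)
    + (if q = (p.2, p.1) ∧ p.2 < p.1 then s - r else 0)

/-- `A ⊗ 1` acting on factors 1,2 of `V ⊗ V ⊗ V`. -/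
noncomputable def lift12 {n : ℕ} (A : Matrix (Fin n × Fin n) (Fin n × Fin n) ℂ) :
    Matrix (Fin n × Fin n × Fin n) (Fin n × Fin n × Fin n) ℂ := fun p q =>
  A (p.1, p.2.1) (q.1, q.2.1) * (if p.2.2 = q.2.2 then 1 else 0)

/-- `1 ⊗ A` acting on factors 2,3 of `V ⊗ V ⊗ V`. -/
noncomputable def lift23 {n : ℕ} (A : Matrix (Fin n × Fin n) (Fin n × Fin n) ℂ) :
    Matrix (Fin n × Fin n × Fin n) (Fin n × Fin n × Fin n) ℂ := fun p q =>
  A (p.2.1, p.2.2) (q.2.1, q.2.2) * (if p.1 = q.1 then 1 else 0)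

/-- `A` acting on factors 1,3 of `V ⊗ V ⊗ V`. -/
noncomputable def lift13 {n : ℕ} (A : Matrix (Fin n × Fin n) (Fin n × Fin n) ℂ) :
    Matrix (Fin n × Fin n × Fin n) (Fin n × Fin n × Fin n) ℂ := fun p q =>
  A (p.1, p.2.2) (q.1, q.2.2) * (if p.2.1 = q.2.1 then 1 else 0)

noncomputable def Fc {n : ℕ} (r s : ℂ) (i j : Fin n) : ℂ :=
  if i = j then s else if j < i then r * s else 1

noncomputable def Gc {n : ℕ} (r s : ℂ) (i j : Fin n) : ℂ :=
  if j < i then s - r else 0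

lemma Fc_self {n : ℕ} (r s : ℂ) (i : Fin n) : Fc r s i i = s := by simp [Fc]
lemma Fc_of_lt {n : ℕ} (r s : ℂ) {i j : Fin n} (h : i < j) : Fc r s i j = 1 := by
  simp [Fc, h.ne, not_lt.2 h.le]
lemma Fc_of_gt {n : ℕ} (r s : ℂ) {i j : Fin n} (h : j < i) : Fc r s i j = r * s := by
  simp [Fc, h.ne', h]
lemma Gc_self {n : ℕ} (r s : ℂ) (i : Fin n) : Gc r s i i = 0 := by simp [Gc]
lemma Gc_of_lt {n : ℕ} (r s : ℂ) {i j : Fin n} (h : i < j) : Gc r s i j = 0 := by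
  simp [Gc, not_lt.2 h.le]
lemma Gc_of_gt {n : ℕ} (r s : ℂ) {i j : Fin n} (h : j < i) : Gc r s i j = s - r := by
  simp [Gc, h]

lemma Rmat_eq (n : ℕ) (r s : ℂ) (p q : Fin n × Fin n) :
    Rmat n r s p q = (if q = p then Fc r s p.1 p.2 else 0)
      + (if q = (p.2, p.1) then Gc r s p.1 p.2 else 0) := by
  simp only [Rmat, Fc, Gc, ite_and]

lemma mul12 {n : ℕ} (r s : ℂ) (X : Matrix (Fin n × Fin n × Fin n) (Fin n × Fin n × Fin n) ℂ)
    (p q : Fin n × Fin n × Fin n) :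
    (lift12 (Rmat n r s) * X) p q
      = Fc r s p.1 p.2.1 * X (p.1, p.2.1, p.2.2) q
        + Gc r s p.1 p.2.1 * X (p.2.1, p.1, p.2.2) q := by
  rw [Matrix.mul_apply]
  simp only [lift12, Rmat_eq]
  rw [Fintype.sum_prod_type]
  simp [Fintype.sum_prod_type, add_mul, mul_ite, ite_mul, zero_mul, mul_zero, mul_one,
    Finset.sum_add_distrib, Prod.ext_iff, ite_and, Finset.sum_ite_eq, Finset.sum_ite_eq']

lemma mul13 {n : ℕ} (r s : ℂ) (X : Matrix (Fin n × Fin n × Fin n) (Fin n × Fin n × Fin n) ℂ)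
    (p q : Fin n × Fin n × Fin n) :
    (lift13 (Rmat n r s) * X) p q
      = Fc r s p.1 p.2.2 * X (p.1, p.2.1, p.2.2) q
        + Gc r s p.1 p.2.2 * X (p.2.2, p.2.1, p.1) q := by
  rw [Matrix.mul_apply]
  simp only [lift13, Rmat_eq]
  rw [Fintype.sum_prod_type]
  simp [Fintype.sum_prod_type, add_mul, mul_ite, ite_mul, zero_mul, mul_zero, mul_one,
    Finset.sum_add_distrib, Prod.ext_iff, ite_and, Finset.sum_ite_eq, Finset.sum_ite_eq']

lemma mul23 {n : ℕ} (r s : ℂ) (X : Matrix (Fin n × Fin n × Fin n) (Fin n × Fin n × Fin n) ℂ)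
    (p q : Fin n × Fin n × Fin n) :
    (lift23 (Rmat n r s) * X) p q
      = Fc r s p.2.1 p.2.2 * X (p.1, p.2.1, p.2.2) q
        + Gc r s p.2.1 p.2.2 * X (p.1, p.2.2, p.2.1) q := by
  rw [Matrix.mul_apply]
  simp only [lift23, Rmat_eq]
  rw [Fintype.sum_prod_type]
  simp [Fintype.sum_prod_type, add_mul, mul_ite, ite_mul, zero_mul, mul_zero, mul_one,
    Finset.sum_add_distrib, Prod.ext_iff, ite_and, Finset.sum_ite_eq, Finset.sum_ite_eq']

lemma app23 {n : ℕ} (r s : ℂ) (p q : Fin n × Fin n × Fin n) :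
    lift23 (Rmat n r s) p q
      = Fc r s p.2.1 p.2.2 * (if q = (p.1, p.2.1, p.2.2) then 1 else 0)
        + Gc r s p.2.1 p.2.2 * (if q = (p.1, p.2.2, p.2.1) then 1 else 0) := by
  obtain ⟨p1, p2, p3⟩ := p
  obtain ⟨q1, q2, q3⟩ := q
  simp only [lift23, Rmat_eq, Prod.mk.injEq]
  by_cases h0 : p1 = q1
  · subst h0
    by_cases hA : q2 = p2 ∧ q3 = p3
    · by_cases hB : q2 = p3 ∧ q3 = p2
      · obtain ⟨a1, a2⟩ := hA
        obtain ⟨b1, b2⟩ := hB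
        subst a1; subst a2; subst b1
        simp
      · simp [hA, hB]
    · by_cases hB : q2 = p3 ∧ q3 = p2 <;> simp [hA, hB]
  · have h0' : ¬ q1 = p1 := fun h => h0 h.symm
    simp [h0, h0']

lemma app12 {n : ℕ} (r s : ℂ) (p q : Fin n × Fin n × Fin n) :
    lift12 (Rmat n r s) p q
      = Fc r s p.1 p.2.1 * (if q = (p.1, p.2.1, p.2.2) then 1 else 0)
        + Gc r s p.1 p.2.1 * (if q = (p.2.1, p.1, p.2.2) then 1 else 0) := by
  obtain ⟨p1, p2, p3⟩ := p
  obtain ⟨q1, q2, q3⟩ := q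
  simp only [lift12, Rmat_eq, Prod.mk.injEq]
  by_cases h0 : p3 = q3
  · subst h0
    by_cases hA : q1 = p1 ∧ q2 = p2
    · by_cases hB : q1 = p2 ∧ q2 = p1
      · obtain ⟨a1, a2⟩ := hA
        obtain ⟨b1, b2⟩ := hB
        subst a1; subst a2; subst b1
        simp
      · simp [hA, hB]
    · by_cases hB : q1 = p2 ∧ q2 = p1 <;> simp [hA, hB]
  · have h0' : ¬ q3 = p3 := fun h => h0 h.symm
    simp [h0, h0']

/-- the two-parameter R-matrix satisfies the quantum Yang–Baxter
equation `R₁₂ R₁₃ R₂₃ = R₂₃ R₁₃ R₁₂` on `V ⊗ V ⊗ V`. -/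
theorem stmt0 (n : ℕ) (hn : 1 ≤ n) (r s : ℂ) (hr : r ≠ 0) (hs : s ≠ 0) :
    lift12 (Rmat n r s) * lift13 (Rmat n r s) * lift23 (Rmat n r s)
      = lift23 (Rmat n r s) * lift13 (Rmat n r s) * lift12 (Rmat n r s) := by
  ext ⟨a, b, c⟩ q
  rw [Matrix.mul_assoc, Matrix.mul_assoc]
  simp only [mul12, mul13, mul23, app23, app12]
  rcases lt_trichotomy a b with hab | rfl | hab
  · rcases lt_trichotomy b c with hbc | rfl | hbc
    · have hac : a < c := hab.trans hbc
      simp only [Fc_of_lt r s hab, Fc_of_lt r s hbc, Fc_of_lt r s hac,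
        Fc_of_gt r s hab, Fc_of_gt r s hbc, Fc_of_gt r s hac,
        Gc_of_lt r s hab, Gc_of_lt r s hbc, Gc_of_lt r s hac,
        Gc_of_gt r s hab, Gc_of_gt r s hbc, Gc_of_gt r s hac]
      ring
    · simp only [Fc_of_lt r s hab, Fc_of_gt r s hab, Gc_of_lt r s hab, Gc_of_gt r s hab,
        Fc_self, Gc_self]
      ring
    · rcases lt_trichotomy a c with hac | rfl | hac
      · simp only [Fc_of_lt r s hab, Fc_of_lt r s hac, Fc_of_gt r s hab, Fc_of_gt r s hbc,
          Fc_of_gt r s hac, Fc_of_lt r s hbc,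
          Gc_of_lt r s hab, Gc_of_lt r s hac, Gc_of_gt r s hab, Gc_of_gt r s hbc,
          Gc_of_gt r s hac, Gc_of_lt r s hbc]
        ring
      · simp only [Fc_of_lt r s hab, Fc_of_gt r s hab, Fc_of_gt r s hbc, Fc_of_lt r s hbc,
          Gc_of_lt r s hab, Gc_of_gt r s hab, Gc_of_gt r s hbc, Gc_of_lt r s hbc,
          Fc_self, Gc_self]
        ring
      · simp only [Fc_of_lt r s hab, Fc_of_gt r s hab, Fc_of_gt r s hbc, Fc_of_lt r s hbc,
          Fc_of_gt r s hac, Fc_of_lt r s hac,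
          Gc_of_lt r s hab, Gc_of_gt r s hab, Gc_of_gt r s hbc, Gc_of_lt r s hbc,
          Gc_of_gt r s hac, Gc_of_lt r s hac]
        ring
  · rcases lt_trichotomy a c with hac | rfl | hac
    · simp only [Fc_of_lt r s hac, Fc_of_gt r s hac, Gc_of_lt r s hac, Gc_of_gt r s hac,
        Fc_self, Gc_self]
      ring
    · simp only [Fc_self, Gc_self]
      try ring
    · simp only [Fc_of_lt r s hac, Fc_of_gt r s hac, Gc_of_lt r s hac, Gc_of_gt r s hac,
        Fc_self, Gc_self]
      ring
  · rcases lt_trichotomy b c with hbc | rfl | hbc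
    · rcases lt_trichotomy a c with hac | rfl | hac
      · simp only [Fc_of_lt r s hac, Fc_of_gt r s hac, Fc_of_lt r s hbc, Fc_of_gt r s hbc,
          Fc_of_lt r s hab, Fc_of_gt r s hab,
          Gc_of_lt r s hac, Gc_of_gt r s hac, Gc_of_lt r s hbc, Gc_of_gt r s hbc,
          Gc_of_lt r s hab, Gc_of_gt r s hab]
        ring
      · simp only [Fc_of_lt r s hbc, Fc_of_gt r s hbc, Fc_of_lt r s hab, Fc_of_gt r s hab,
          Gc_of_lt r s hbc, Gc_of_gt r s hbc, Gc_of_lt r s hab, Gc_of_gt r s hab,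
          Fc_self, Gc_self]
        ring
      · simp only [Fc_of_lt r s hbc, Fc_of_gt r s hbc, Fc_of_lt r s hab, Fc_of_gt r s hab,
          Fc_of_lt r s hac, Fc_of_gt r s hac,
          Gc_of_lt r s hbc, Gc_of_gt r s hbc, Gc_of_lt r s hab, Gc_of_gt r s hab,
          Gc_of_lt r s hac, Gc_of_gt r s hac]
        ring
    · simp only [Fc_of_lt r s hab, Fc_of_gt r s hab, Gc_of_lt r s hab, Gc_of_gt r s hab,
        Fc_self, Gc_self]
      ring
    · have hac : c < a := hbc.trans hab
      simp only [Fc_of_lt r s hab, Fc_of_gt r s hab, Fc_of_lt r s hbc, Fc_of_gt r s hbc,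
        Fc_of_lt r s hac, Fc_of_gt r s hac,
        Gc_of_lt r s hab, Gc_of_gt r s hab, Gc_of_lt r s hbc, Gc_of_gt r s hbc,
        Gc_of_lt r s hac, Gc_of_gt r s hac]
      ring
end

section
/- The operator R̂ = PR satisfies the braid relation R̂₁₂R̂₂₃R̂₁₂ = R̂₂₃R̂₁₂R̂₂₃ on V⊗V⊗V. -/
open Matrix

/-- The flip operator `P(u ⊗ v) = v ⊗ u` on `V ⊗ V`. -/
noncomputable def Pflip (n : ℕ) : Matrix (Fin n × Fin n) (Fin n × Fin n) ℂ :=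
  fun p q => if p.1 = q.2 ∧ p.2 = q.1 then 1 else 0

/-- The braided R-matrix `R̂ = P R`. -/
noncomputable def Rhat (n : ℕ) (r s : ℂ) :
    Matrix (Fin n × Fin n) (Fin n × Fin n) ℂ := Pflip n * Rmat n r s

noncomputable def gco (r s : ℂ) {n : ℕ} (a b : Fin n) : ℂ :=
  if a = b then s else if a < b then r * s else 1

lemma Rhat_apply (n : ℕ) (r s : ℂ) (p q : Fin n × Fin n) :
    Rhat n r s p q =
      (if q = (p.2, p.1) then gco r s p.1 p.2 else 0)
        + (if p.1 < p.2 ∧ q = p then s - r else 0) := by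
  have h1 : ∀ k : Fin n × Fin n, (Pflip n p k) = if k = (p.2, p.1) then 1 else 0 := by
    intro k
    simp [Pflip, Prod.ext_iff, and_comm, eq_comm]
  simp only [Rhat, Matrix.mul_apply, h1, ite_mul, one_mul, zero_mul,
    Finset.sum_ite_eq' Finset.univ, Finset.mem_univ, if_true]
  simp [Rmat, gco, eq_comm, and_comm]

lemma Rhat_row (n : ℕ) (r s : ℂ) (a b : Fin n) (f : Fin n → Fin n → ℂ) :
    (∑ q : Fin n × Fin n, Rhat n r s (a, b) q * f q.1 q.2)
      = gco r s a b * f b a + (if a < b then (s - r) * f a b else 0) := by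
  simp only [Rhat_apply, add_mul, ite_mul, zero_mul, Finset.sum_add_distrib, ite_and, gco]
  by_cases h : a < b <;> by_cases h2 : a = b <;>
    simp [h, h2, Finset.sum_ite_eq' Finset.univ, mul_comm]

lemma Rhat_row' (n : ℕ) (r s : ℂ) (a b : Fin n) (f : Fin n → Fin n → ℂ) :
    (∑ c : Fin n, ∑ d : Fin n, Rhat n r s (a, b) (c, d) * f c d)
      = gco r s a b * f b a + (if a < b then (s - r) * f a b else 0) := by
  rw [← Rhat_row n r s a b f]
  exact (Fintype.sum_prod_type (f := fun q : Fin n × Fin n => Rhat n r s (a, b) q * f q.1 q.2)).symm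

-- entry of lift23 A * lift12 A
lemma L2312_apply (n : ℕ) (r s : ℂ) (u₁ u₂ u₃ x y z : Fin n) :
    (lift23 (Rhat n r s) * lift12 (Rhat n r s)) (u₁, u₂, u₃) (x, y, z)
      = gco r s u₂ u₃ * (Rhat n r s (u₁, u₃) (x, y) * (if u₂ = z then 1 else 0))
        + (if u₂ < u₃ then (s - r) *
            (Rhat n r s (u₁, u₂) (x, y) * (if u₃ = z then 1 else 0)) else 0) := by
  rw [Matrix.mul_apply, Fintype.sum_prod_type, Finset.sum_comm]
  simp only [lift23, lift12]
  have key : ∀ v : Fin n × Fin n,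
      (∑ v1 : Fin n, (Rhat n r s (u₂, u₃) (v.1, v.2) * (if u₁ = v1 then 1 else 0))
          * (Rhat n r s (v1, v.1) (x, y) * (if v.2 = z then 1 else 0)))
        = Rhat n r s (u₂, u₃) (v.1, v.2)
            * (Rhat n r s (u₁, v.1) (x, y) * (if v.2 = z then 1 else 0)) := by
    intro v
    rw [Finset.sum_eq_single u₁]
    · simp
    · intro b _ hb
      simp [Ne.symm hb]
    · simp
  calc (∑ v : Fin n × Fin n, ∑ v1 : Fin n,
        (Rhat n r s (u₂, u₃) (v.1, v.2) * (if u₁ = v1 then 1 else 0))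
          * (Rhat n r s (v1, v.1) (x, y) * (if v.2 = z then 1 else 0)))
      = ∑ v : Fin n × Fin n, Rhat n r s (u₂, u₃) (v.1, v.2)
          * (Rhat n r s (u₁, v.1) (x, y) * (if v.2 = z then 1 else 0)) :=
        Finset.sum_congr rfl (fun v _ => key v)
    _ = ∑ c : Fin n, ∑ d : Fin n, Rhat n r s (u₂, u₃) (c, d)
          * (Rhat n r s (u₁, c) (x, y) * (if d = z then 1 else 0)) :=
        Fintype.sum_prod_type _
    _ = _ := Rhat_row' n r s u₂ u₃
          (fun c d => Rhat n r s (u₁, c) (x, y) * (if d = z then 1 else 0))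

lemma L1223_apply (n : ℕ) (r s : ℂ) (u₁ u₂ u₃ x y z : Fin n) :
    (lift12 (Rhat n r s) * lift23 (Rhat n r s)) (u₁, u₂, u₃) (x, y, z)
      = gco r s u₁ u₂ * (Rhat n r s (u₁, u₃) (y, z) * (if u₂ = x then 1 else 0))
        + (if u₁ < u₂ then (s - r) *
            (Rhat n r s (u₂, u₃) (y, z) * (if u₁ = x then 1 else 0)) else 0) := by
  rw [Matrix.mul_apply, Fintype.sum_prod_type]
  simp only [lift12, lift23]
  have key : ∀ v1 : Fin n,
      (∑ w : Fin n × Fin n, (Rhat n r s (u₁, u₂) (v1, w.1) * (if u₃ = w.2 then 1 else 0))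
          * (Rhat n r s (w.1, w.2) (y, z) * (if v1 = x then 1 else 0)))
        = ∑ v2 : Fin n, Rhat n r s (u₁, u₂) (v1, v2)
            * (Rhat n r s (v2, u₃) (y, z) * (if v1 = x then 1 else 0)) := by
    intro v1
    rw [Fintype.sum_prod_type]
    refine Finset.sum_congr rfl (fun v2 _ => ?_)
    rw [Finset.sum_eq_single u₃]
    · simp
    · intro b _ hb
      simp [Ne.symm hb]
    · simp
  calc _ = ∑ v1 : Fin n, ∑ v2 : Fin n, Rhat n r s (u₁, u₂) (v1, v2)
            * (Rhat n r s (v2, u₃) (y, z) * (if v1 = x then 1 else 0)) :=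
        Finset.sum_congr rfl (fun v1 _ => key v1)
    _ = _ := Rhat_row' n r s u₁ u₂
          (fun v1 v2 => Rhat n r s (v2, u₃) (y, z) * (if v1 = x then 1 else 0))

noncomputable def FL (n : ℕ) (r s : ℂ) (c x y z u₁ u₂ : Fin n) : ℂ :=
  gco r s u₂ c * (Rhat n r s (u₁, c) (x, y) * (if u₂ = z then 1 else 0))
    + (if u₂ < c then (s - r) *
        (Rhat n r s (u₁, u₂) (x, y) * (if c = z then 1 else 0)) else 0)

noncomputable def FR (n : ℕ) (r s : ℂ) (a x y z u₂ u₃ : Fin n) : ℂ :=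
  gco r s a u₂ * (Rhat n r s (a, u₃) (y, z) * (if u₂ = x then 1 else 0))
    + (if a < u₂ then (s - r) *
        (Rhat n r s (u₂, u₃) (y, z) * (if a = x then 1 else 0)) else 0)

lemma LHS_apply (n : ℕ) (r s : ℂ) (a b c x y z : Fin n) :
    (lift12 (Rhat n r s) * (lift23 (Rhat n r s) * lift12 (Rhat n r s))) (a, b, c) (x, y, z)
      = gco r s a b * FL n r s c x y z b a
        + (if a < b then (s - r) * FL n r s c x y z a b else 0) := by
  rw [Matrix.mul_apply, Fintype.sum_prod_type]
  simp only [lift12]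
  have key : ∀ u1 : Fin n,
      (∑ w : Fin n × Fin n, (Rhat n r s (a, b) (u1, w.1) * (if c = w.2 then 1 else 0))
          * (lift23 (Rhat n r s) * lift12 (Rhat n r s)) (u1, w.1, w.2) (x, y, z))
        = ∑ u2 : Fin n, Rhat n r s (a, b) (u1, u2) * FL n r s c x y z u1 u2 := by
    intro u1
    rw [Fintype.sum_prod_type]
    refine Finset.sum_congr rfl (fun u2 _ => ?_)
    rw [Finset.sum_eq_single c]
    · simp [L2312_apply, FL]
    · intro b _ hb
      simp [Ne.symm hb]
    · simp
  calc _ = ∑ u1 : Fin n, ∑ u2 : Fin n, Rhat n r s (a, b) (u1, u2) * FL n r s c x y z u1 u2 :=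
        Finset.sum_congr rfl (fun u1 _ => key u1)
    _ = _ := Rhat_row' n r s a b (fun u1 u2 => FL n r s c x y z u1 u2)

lemma RHS_apply (n : ℕ) (r s : ℂ) (a b c x y z : Fin n) :
    (lift23 (Rhat n r s) * (lift12 (Rhat n r s) * lift23 (Rhat n r s))) (a, b, c) (x, y, z)
      = gco r s b c * FR n r s a x y z c b
        + (if b < c then (s - r) * FR n r s a x y z b c else 0) := by
  rw [Matrix.mul_apply, Fintype.sum_prod_type]
  simp only [lift23]
  have key : ∀ u1 : Fin n,
      (∑ w : Fin n × Fin n, (Rhat n r s (b, c) (w.1, w.2) * (if a = u1 then 1 else 0))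
          * (lift12 (Rhat n r s) * lift23 (Rhat n r s)) (u1, w.1, w.2) (x, y, z))
        = if a = u1 then
            ∑ w : Fin n × Fin n, Rhat n r s (b, c) (w.1, w.2)
              * (lift12 (Rhat n r s) * lift23 (Rhat n r s)) (a, w.1, w.2) (x, y, z)
          else 0 := by
    intro u1
    by_cases h : a = u1
    · subst h
      simp
    · simp [h]
  calc _ = ∑ u1 : Fin n, (if a = u1 then
            ∑ w : Fin n × Fin n, Rhat n r s (b, c) (w.1, w.2)
              * (lift12 (Rhat n r s) * lift23 (Rhat n r s)) (a, w.1, w.2) (x, y, z) else 0) :=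
        Finset.sum_congr rfl (fun u1 _ => key u1)
    _ = ∑ w : Fin n × Fin n, Rhat n r s (b, c) (w.1, w.2)
          * (lift12 (Rhat n r s) * lift23 (Rhat n r s)) (a, w.1, w.2) (x, y, z) := by
        rw [Finset.sum_ite_eq Finset.univ a]
        simp
    _ = ∑ u2 : Fin n, ∑ u3 : Fin n, Rhat n r s (b, c) (u2, u3) * FR n r s a x y z u2 u3 := by
        rw [Fintype.sum_prod_type]
        refine Finset.sum_congr rfl (fun u2 _ => Finset.sum_congr rfl (fun u3 _ => ?_))
        rw [L1223_apply]
        rfl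
    _ = _ := Rhat_row' n r s b c (fun u2 u3 => FR n r s a x y z u2 u3)

noncomputable def dd (P : Prop) [Decidable P] : ℂ := if P then 1 else 0

lemma dd_and (P Q : Prop) [Decidable P] [Decidable Q] :
    dd (P ∧ Q) = dd P * dd Q := by
  by_cases hP : P <;> by_cases hQ : Q <;> simp [dd, hP, hQ]

lemma ite_dd1 (P : Prop) [Decidable P] (c : ℂ) :
    (if P then c else 0) = dd P * c := by
  by_cases hP : P <;> simp [dd, hP]

set_option maxHeartbeats 2000000 in
lemma braid_scalar (n : ℕ) (r s : ℂ) (a b c x y z : Fin n) :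
    gco r s a b * FL n r s c x y z b a + (if a < b then (s - r) * FL n r s c x y z a b else 0)
      = gco r s b c * FR n r s a x y z c b
        + (if b < c then (s - r) * FR n r s a x y z b c else 0) := by
  rcases lt_trichotomy a b with hab | hab | hab
  · rcases lt_trichotomy b c with hbc | hbc | hbc
    · have hac : a < c := hab.trans hbc
      simp only [FL, FR, gco, Rhat_apply, Prod.mk.injEq,
        @eq_comm (Fin n) a x, @eq_comm (Fin n) b x, @eq_comm (Fin n) c x,
        @eq_comm (Fin n) a y, @eq_comm (Fin n) b y, @eq_comm (Fin n) c y,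
        @eq_comm (Fin n) a z, @eq_comm (Fin n) b z, @eq_comm (Fin n) c z,
        lt_self_iff_false, if_true, if_false, ite_true, ite_false,
        true_and, false_and, and_true, and_false, hab, hab.ne, hab.ne', asymm hab, hbc, hbc.ne, hbc.ne', asymm hbc, hac, hac.ne, hac.ne', asymm hac, ite_dd1, dd_and]
      ring1
    · subst hbc
      simp only [FL, FR, gco, Rhat_apply, Prod.mk.injEq,
        @eq_comm (Fin n) a x, @eq_comm (Fin n) b x, @eq_comm (Fin n) b x,
        @eq_comm (Fin n) a y, @eq_comm (Fin n) b y, @eq_comm (Fin n) b y,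
        @eq_comm (Fin n) a z, @eq_comm (Fin n) b z, @eq_comm (Fin n) b z,
        lt_self_iff_false, if_true, if_false, ite_true, ite_false,
        true_and, false_and, and_true, and_false, hab, hab.ne, hab.ne', asymm hab, ite_dd1, dd_and]
      ring1
    · rcases lt_trichotomy a c with hac | hac | hac
      · simp only [FL, FR, gco, Rhat_apply, Prod.mk.injEq,
          @eq_comm (Fin n) a x, @eq_comm (Fin n) b x, @eq_comm (Fin n) c x,
          @eq_comm (Fin n) a y, @eq_comm (Fin n) b y, @eq_comm (Fin n) c y,
          @eq_comm (Fin n) a z, @eq_comm (Fin n) b z, @eq_comm (Fin n) c z,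
          lt_self_iff_false, if_true, if_false, ite_true, ite_false,
          true_and, false_and, and_true, and_false, hab, hab.ne, hab.ne', asymm hab, hbc, hbc.ne, hbc.ne', asymm hbc, hac, hac.ne, hac.ne', asymm hac, ite_dd1, dd_and]
        ring1
      · subst hac
        simp only [FL, FR, gco, Rhat_apply, Prod.mk.injEq,
          @eq_comm (Fin n) a x, @eq_comm (Fin n) b x, @eq_comm (Fin n) a x,
          @eq_comm (Fin n) a y, @eq_comm (Fin n) b y, @eq_comm (Fin n) a y,
          @eq_comm (Fin n) a z, @eq_comm (Fin n) b z, @eq_comm (Fin n) a z,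
          lt_self_iff_false, if_true, if_false, ite_true, ite_false,
          true_and, false_and, and_true, and_false, hab, hab.ne, hab.ne', asymm hab, hbc, hbc.ne, hbc.ne', asymm hbc, ite_dd1, dd_and]
        ring1
      · simp only [FL, FR, gco, Rhat_apply, Prod.mk.injEq,
          @eq_comm (Fin n) a x, @eq_comm (Fin n) b x, @eq_comm (Fin n) c x,
          @eq_comm (Fin n) a y, @eq_comm (Fin n) b y, @eq_comm (Fin n) c y,
          @eq_comm (Fin n) a z, @eq_comm (Fin n) b z, @eq_comm (Fin n) c z,
          lt_self_iff_false, if_true, if_false, ite_true, ite_false,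
          true_and, false_and, and_true, and_false, hab, hab.ne, hab.ne', asymm hab, hbc, hbc.ne, hbc.ne', asymm hbc, hac, hac.ne, hac.ne', asymm hac, ite_dd1, dd_and]
        ring1
  · subst hab
    rcases lt_trichotomy a c with hbc | hbc | hbc
    · simp only [FL, FR, gco, Rhat_apply, Prod.mk.injEq,
        @eq_comm (Fin n) a x, @eq_comm (Fin n) a x, @eq_comm (Fin n) c x,
        @eq_comm (Fin n) a y, @eq_comm (Fin n) a y, @eq_comm (Fin n) c y,
        @eq_comm (Fin n) a z, @eq_comm (Fin n) a z, @eq_comm (Fin n) c z,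
        lt_self_iff_false, if_true, if_false, ite_true, ite_false,
        true_and, false_and, and_true, and_false, hbc, hbc.ne, hbc.ne', asymm hbc, ite_dd1, dd_and]
      ring1
    · subst hbc
      simp only [FL, FR, gco, Rhat_apply, Prod.mk.injEq,
        @eq_comm (Fin n) a x, @eq_comm (Fin n) a x, @eq_comm (Fin n) a x,
        @eq_comm (Fin n) a y, @eq_comm (Fin n) a y, @eq_comm (Fin n) a y,
        @eq_comm (Fin n) a z, @eq_comm (Fin n) a z, @eq_comm (Fin n) a z,
        lt_self_iff_false, if_true, if_false, ite_true, ite_false,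
        true_and, false_and, and_true, and_false, ite_dd1, dd_and]
      ring1
    · simp only [FL, FR, gco, Rhat_apply, Prod.mk.injEq,
        @eq_comm (Fin n) a x, @eq_comm (Fin n) a x, @eq_comm (Fin n) c x,
        @eq_comm (Fin n) a y, @eq_comm (Fin n) a y, @eq_comm (Fin n) c y,
        @eq_comm (Fin n) a z, @eq_comm (Fin n) a z, @eq_comm (Fin n) c z,
        lt_self_iff_false, if_true, if_false, ite_true, ite_false,
        true_and, false_and, and_true, and_false, hbc, hbc.ne, hbc.ne', asymm hbc, ite_dd1, dd_and]
      ring1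
  · rcases lt_trichotomy b c with hbc | hbc | hbc
    · rcases lt_trichotomy a c with hac | hac | hac
      · simp only [FL, FR, gco, Rhat_apply, Prod.mk.injEq,
          @eq_comm (Fin n) a x, @eq_comm (Fin n) b x, @eq_comm (Fin n) c x,
          @eq_comm (Fin n) a y, @eq_comm (Fin n) b y, @eq_comm (Fin n) c y,
          @eq_comm (Fin n) a z, @eq_comm (Fin n) b z, @eq_comm (Fin n) c z,
          lt_self_iff_false, if_true, if_false, ite_true, ite_false,
          true_and, false_and, and_true, and_false, hab, hab.ne, hab.ne', asymm hab, hbc, hbc.ne, hbc.ne', asymm hbc, hac, hac.ne, hac.ne', asymm hac, ite_dd1, dd_and]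
        ring1
      · subst hac
        simp only [FL, FR, gco, Rhat_apply, Prod.mk.injEq,
          @eq_comm (Fin n) a x, @eq_comm (Fin n) b x, @eq_comm (Fin n) a x,
          @eq_comm (Fin n) a y, @eq_comm (Fin n) b y, @eq_comm (Fin n) a y,
          @eq_comm (Fin n) a z, @eq_comm (Fin n) b z, @eq_comm (Fin n) a z,
          lt_self_iff_false, if_true, if_false, ite_true, ite_false,
          true_and, false_and, and_true, and_false, hab, hab.ne, hab.ne', asymm hab, hbc, hbc.ne, hbc.ne', asymm hbc, ite_dd1, dd_and]
        ring1
      · simp only [FL, FR, gco, Rhat_apply, Prod.mk.injEq,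
          @eq_comm (Fin n) a x, @eq_comm (Fin n) b x, @eq_comm (Fin n) c x,
          @eq_comm (Fin n) a y, @eq_comm (Fin n) b y, @eq_comm (Fin n) c y,
          @eq_comm (Fin n) a z, @eq_comm (Fin n) b z, @eq_comm (Fin n) c z,
          lt_self_iff_false, if_true, if_false, ite_true, ite_false,
          true_and, false_and, and_true, and_false, hab, hab.ne, hab.ne', asymm hab, hbc, hbc.ne, hbc.ne', asymm hbc, hac, hac.ne, hac.ne', asymm hac, ite_dd1, dd_and]
        ring1
    · subst hbc
      simp only [FL, FR, gco, Rhat_apply, Prod.mk.injEq,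
        @eq_comm (Fin n) a x, @eq_comm (Fin n) b x, @eq_comm (Fin n) b x,
        @eq_comm (Fin n) a y, @eq_comm (Fin n) b y, @eq_comm (Fin n) b y,
        @eq_comm (Fin n) a z, @eq_comm (Fin n) b z, @eq_comm (Fin n) b z,
        lt_self_iff_false, if_true, if_false, ite_true, ite_false,
        true_and, false_and, and_true, and_false, hab, hab.ne, hab.ne', asymm hab, ite_dd1, dd_and]
      ring1
    · have hac : c < a := hbc.trans hab
      simp only [FL, FR, gco, Rhat_apply, Prod.mk.injEq,
        @eq_comm (Fin n) a x, @eq_comm (Fin n) b x, @eq_comm (Fin n) c x,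
        @eq_comm (Fin n) a y, @eq_comm (Fin n) b y, @eq_comm (Fin n) c y,
        @eq_comm (Fin n) a z, @eq_comm (Fin n) b z, @eq_comm (Fin n) c z,
        lt_self_iff_false, if_true, if_false, ite_true, ite_false,
        true_and, false_and, and_true, and_false, hab, hab.ne, hab.ne', asymm hab, hbc, hbc.ne, hbc.ne', asymm hbc, hac, hac.ne, hac.ne', asymm hac, ite_dd1, dd_and]
      ring1

/-- `R̂ = PR` satisfies the braid relation
`R̂₁₂ R̂₂₃ R̂₁₂ = R̂₂₃ R̂₁₂ R̂₂₃` on `V ⊗ V ⊗ V`. -/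
theorem stmt2 (n : ℕ) (r s : ℂ) :
    lift12 (Rhat n r s) * lift23 (Rhat n r s) * lift12 (Rhat n r s)
      = lift23 (Rhat n r s) * lift12 (Rhat n r s) * lift23 (Rhat n r s) := by
  ext ⟨a, b, c⟩ ⟨x, y, z⟩
  rw [Matrix.mul_assoc, Matrix.mul_assoc, LHS_apply, RHS_apply]
  exact braid_scalar n r s a b c x y z
end

section
/- The vector |ε⟩ = r^{n(n−1)/2}·Σ_{σ∈Sₙ} (−r)^{−ℓ(σ)} e^{σ(1)}⊗⋯⊗e^{σ(n)} satisfies P⁺_{k,k+1}|ε⟩ = 0 for all k = 1,…,n−1, where P⁺ = (R̂ + r)/(r+s). -/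
open Matrix

/-- `P⁺ = (R̂ + r)/(r + s)`. -/
noncomputable def Pplus (n : ℕ) (r s : ℂ) :
    Matrix (Fin n × Fin n) (Fin n × Fin n) ℂ :=
  (r + s)⁻¹ • (Rhat n r s + r • (1 : Matrix (Fin n × Fin n) (Fin n × Fin n) ℂ))

/-- The length (number of inversions) of a permutation of `Fin n`. -/
def invNum {n : ℕ} (σ : Equiv.Perm (Fin n)) : ℕ :=
  (Finset.univ.filter fun p : Fin n × Fin n => p.1 < p.2 ∧ σ p.2 < σ p.1).card

/-- The two-parameter factorial `[n]_{r,s}! = Π_{k=1}^n (s^k - r^k)/(s - r)`. -/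
noncomputable def qfact (n : ℕ) (r s : ℂ) : ℂ :=
  ∏ k ∈ Finset.range n, (s ^ (k + 1) - r ^ (k + 1)) / (s - r)

/-- The antisymmetric vector
`|ε⟩ = r^{n(n-1)/2} Σ_{σ∈Sₙ} (-r)^{-ℓ(σ)} e^{σ(1)} ⊗ ⋯ ⊗ e^{σ(n)}`,
as a function on multi-indices `Fin n → Fin n` of `V^{⊗n}`. -/
noncomputable def epsVec (n : ℕ) (r s : ℂ) : (Fin n → Fin n) → ℂ := fun f =>
  r ^ (n * (n - 1) / 2) *
    ∑ σ : Equiv.Perm (Fin n), if f = ⇑σ then ((-r) ^ invNum σ)⁻¹ else 0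

/-- A matrix `A` on `V ⊗ V` acting at tensor positions `(k, k+1)` of `V^{⊗n}`. -/
noncomputable def liftAt (n k : ℕ) (hk : k + 1 < n)
    (A : Matrix (Fin n × Fin n) (Fin n × Fin n) ℂ) :
    Matrix (Fin n → Fin n) (Fin n → Fin n) ℂ := fun f g =>
  A (f ⟨k, Nat.lt_of_succ_lt hk⟩, f ⟨k + 1, hk⟩)
      (g ⟨k, Nat.lt_of_succ_lt hk⟩, g ⟨k + 1, hk⟩) *
    ∏ p : Fin n,
      if p = ⟨k, Nat.lt_of_succ_lt hk⟩ ∨ p = ⟨k + 1, hk⟩ then 1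
      else if f p = g p then 1 else 0

/-!
In positions `k, k+1` the operator `P⁺` only couples a multi-index `f` with `f ∘ (k k+1)`:
for `a < b` its block on `(e_a ⊗ e_b, e_b ⊗ e_a)` is `(r+s)⁻¹ [[s, r s], [1, r]]`.
Composing a permutation `σ` with `σ k < σ (k+1)` by the transposition `(k k+1)` adds exactly one
inversion, so the coefficients of `ε` on such a pair are proportional to `(1, -r⁻¹)`, which this
block annihilates. Multi-indices with a repeated letter carry coefficient `0`.
-/

open Function Equiv

section Pplus

variable {n : ℕ} (r s : ℂ)

lemma Rhat_apply_s7 (p q : Fin n × Fin n) : Rhat n r s p q = Rmat n r s p.swap q := by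
  rw [Rhat, Matrix.mul_apply, Finset.sum_eq_single p.swap]
  · simp [Pflip]
  · intro m _ hm
    rw [Pflip, if_neg, zero_mul]
    rintro ⟨h1, h2⟩
    exact hm (Prod.ext h2.symm h1.symm)
  · simp

lemma Pplus_apply_eq_zero {p q : Fin n × Fin n} (h₁ : q ≠ p) (h₂ : q ≠ p.swap) :
    Pplus n r s p q = 0 := by
  simp [Pplus, Rhat_apply_s7, Rmat, h₁, h₂, h₁.symm]

variable {a b : Fin n}

lemma Pplus_apply_self_of_lt (h : a < b) : Pplus n r s (a, b) (a, b) = (r + s)⁻¹ * s := by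
  simp [Pplus, Rhat_apply_s7, Rmat, h, h.ne, h.ne']

lemma Pplus_apply_swap_of_lt (h : a < b) : Pplus n r s (a, b) (b, a) = (r + s)⁻¹ * (r * s) := by
  simp [Pplus, Rhat_apply_s7, Rmat, h, h.ne, h.ne']

lemma Pplus_apply_self_of_gt (h : b < a) : Pplus n r s (a, b) (a, b) = (r + s)⁻¹ * r := by
  simp [Pplus, Rhat_apply_s7, Rmat, h.ne, h.ne', h.not_gt]

lemma Pplus_apply_swap_of_gt (h : b < a) : Pplus n r s (a, b) (b, a) = (r + s)⁻¹ := by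
  simp [Pplus, Rhat_apply_s7, Rmat, h.ne, h.ne', h.not_gt]

lemma sum_Pplus_mul_eq_sum_pair (p : Fin n × Fin n) (w : Fin n × Fin n → ℂ) :
    ∑ q, Pplus n r s p q * w q = ∑ q ∈ {p, p.swap}, Pplus n r s p q * w q := by
  refine (Finset.sum_subset (Finset.subset_univ _) fun q _ hq => ?_).symm
  simp only [Finset.mem_insert, Finset.mem_singleton, not_or] at hq
  rw [Pplus_apply_eq_zero r s hq.1 hq.2, zero_mul]

end Pplus

section liftAt

variable {n k : ℕ} (hk : k + 1 < n) (A : Matrix (Fin n × Fin n) (Fin n × Fin n) ℂ)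

lemma liftAt_apply (f g : Fin n → Fin n) :
    liftAt n k hk A f g =
      ∑ q : Fin n × Fin n,
        if g = update (update f ⟨k, Nat.lt_of_succ_lt hk⟩ q.1) ⟨k + 1, hk⟩ q.2
        then A (f ⟨k, Nat.lt_of_succ_lt hk⟩, f ⟨k + 1, hk⟩) q else 0 := by
  set i : Fin n := ⟨k, Nat.lt_of_succ_lt hk⟩
  set j : Fin n := ⟨k + 1, hk⟩
  have hij : i ≠ j := by simp [i, j, Fin.ext_iff]
  have agree_iff : g = update (update f i (g i)) j (g j) ↔ ∀ p, p ≠ i → p ≠ j → f p = g p := by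
    refine ⟨fun h p hi hj => ?_, fun h => funext fun p => ?_⟩
    · rw [h]; simp [hi, hj]
    · by_cases hj : p = j
      · simp [hj]
      by_cases hi : p = i
      · simp [hi, hij]
      · simp [hi, hj, h p hi hj]
  rw [Finset.sum_eq_single (g i, g j)]
  · dsimp only
    rw [liftAt]
    split_ifs with h <;> rw [agree_iff] at h
    · rw [Finset.prod_eq_one fun p _ => ?_, mul_one]
      by_cases hp : p = i ∨ p = j
      · exact if_pos hp
      · rw [if_neg hp, if_pos (h p (not_or.1 hp).1 (not_or.1 hp).2)]
    · push Not at h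
      obtain ⟨p, hi, hj, hp⟩ := h
      rw [Finset.prod_eq_zero (Finset.mem_univ p) (by rw [if_neg (not_or.2 ⟨hi, hj⟩), if_neg hp]),
        mul_zero]
  · rintro q - hq
    rw [if_neg]
    rintro rfl
    exact hq (by simp [hij])
  · simp

lemma liftAt_mulVec_apply (v : (Fin n → Fin n) → ℂ) (f : Fin n → Fin n) :
    (liftAt n k hk A *ᵥ v) f =
      ∑ q : Fin n × Fin n, A (f ⟨k, Nat.lt_of_succ_lt hk⟩, f ⟨k + 1, hk⟩) q *
        v (update (update f ⟨k, Nat.lt_of_succ_lt hk⟩ q.1) ⟨k + 1, hk⟩ q.2) := by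
  simp only [Matrix.mulVec, dotProduct, liftAt_apply, Finset.sum_mul, ite_mul, zero_mul]
  rw [Finset.sum_comm]
  simp only [Finset.sum_ite_eq', Finset.mem_univ, if_true]

end liftAt

section epsVec

variable {n : ℕ}

lemma swap_apply_lt_swap_apply_iff {i j p q : Fin n} (hij : (i : ℕ) + 1 = j)
    (h₁ : ¬(p = i ∧ q = j)) (h₂ : ¬(p = j ∧ q = i)) : swap i j p < swap i j q ↔ p < q := by
  simp only [swap_apply_def, Fin.lt_def, Fin.ext_iff] at *
  split_ifs <;> omega

lemma invNum_mul_swap {σ : Perm (Fin n)} {i j : Fin n} (hij : (i : ℕ) + 1 = j) (h : σ i < σ j) :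
    invNum (σ * swap i j) = invNum σ + 1 := by
  have hlt : i < j := Fin.lt_def.2 (by omega)
  let e := (Equiv.prodCongr (swap i j) (swap i j)).toEmbedding
  have inversions_eq :
      (Finset.univ.filter fun p : Fin n × Fin n =>
          p.1 < p.2 ∧ (σ * swap i j) p.2 < (σ * swap i j) p.1) =
        insert (i, j)
          ((Finset.univ.filter fun p : Fin n × Fin n => p.1 < p.2 ∧ σ p.2 < σ p.1).map e) := by
    ext ⟨p, q⟩
    simp only [Finset.mem_insert, Finset.mem_map_equiv, e, Finset.mem_filter, Finset.mem_univ,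
      true_and]
    simp only [Perm.mul_apply, prodCongr_symm, symm_swap, prodCongr_apply, Prod.map,
      Prod.mk.injEq]
    by_cases h₁ : p = i ∧ q = j
    · obtain ⟨rfl, rfl⟩ := h₁
      simp [hlt, h]
    by_cases h₂ : p = j ∧ q = i
    · obtain ⟨rfl, rfl⟩ := h₂
      simp [hlt.not_gt, hlt.ne', h.not_gt]
    rw [swap_apply_lt_swap_apply_iff hij h₁ h₂]
    simp [h₁]
  rw [invNum, invNum, inversions_eq, Finset.card_insert_of_notMem, Finset.card_map]
  simp [e, Finset.mem_map_equiv, hlt.not_gt]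

variable (r s : ℂ)

lemma epsVec_apply_perm (σ : Perm (Fin n)) :
    epsVec n r s σ = r ^ (n * (n - 1) / 2) * ((-r) ^ invNum σ)⁻¹ := by
  simp [epsVec]

lemma epsVec_eq_zero_of_not_injective {f : Fin n → Fin n} (hf : ¬Injective f) :
    epsVec n r s f = 0 := by
  refine mul_eq_zero_of_right _ (Finset.sum_eq_zero fun σ _ => if_neg ?_)
  rintro rfl
  exact hf σ.injective

lemma epsVec_comp_swap {f : Fin n → Fin n} {i j : Fin n} (hij : (i : ℕ) + 1 = j) (h : f i < f j) :
    epsVec n r s (f ∘ swap i j) = -r⁻¹ * epsVec n r s f := by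
  by_cases hf : Injective f
  · obtain ⟨σ, rfl⟩ : ∃ σ : Perm (Fin n), ⇑σ = f :=
      ⟨Equiv.ofBijective f (Finite.injective_iff_bijective.1 hf), rfl⟩
    rw [← Perm.coe_mul, epsVec_apply_perm, invNum_mul_swap hij h, epsVec_apply_perm, pow_succ,
      mul_inv]
    ring
  · rw [epsVec_eq_zero_of_not_injective r s hf, epsVec_eq_zero_of_not_injective r s
      ((swap i j).injective_comp f |>.not.2 hf), mul_zero]

end epsVec

theorem stmt7_general (n : ℕ) (r s : ℂ) (hr : r ≠ 0)
    (k : ℕ) (hk : k + 1 < n) :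
    Matrix.mulVec (liftAt n k hk (Pplus n r s)) (epsVec n r s) = 0 := by
  funext f
  set i : Fin n := ⟨k, Nat.lt_of_succ_lt hk⟩
  set j : Fin n := ⟨k + 1, hk⟩
  have hij : (i : ℕ) + 1 = j := rfl
  have hne : i ≠ j := by simp [i, j, Fin.ext_iff]
  have update_swap : update (update f i (f j)) j (f i) = f ∘ swap i j := by
    rw [Equiv.swap_comm, comp_swap_eq_update, update_comm hne]
  rw [liftAt_mulVec_apply, sum_Pplus_mul_eq_sum_pair, Pi.zero_apply]
  rcases lt_trichotomy (f i) (f j) with h | h | h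
  · rw [Finset.sum_pair fun e => h.ne (Prod.ext_iff.1 e).1, Prod.swap, update_eq_self,
      update_eq_self, update_swap, Pplus_apply_self_of_lt r s h, Pplus_apply_swap_of_lt r s h,
      epsVec_comp_swap r s hij h]
    field_simp
    ring
  · have non_injective (q : Fin n × Fin n) (hq : q ∈ ({(f i, f j), (f j, f i)} : Finset _)) :
        ¬Injective (update (update f i q.1) j q.2) := fun hinj => hne <| hinj <| by
      simp only [Finset.mem_insert, Finset.mem_singleton] at hq
      rcases hq with rfl | rfl <;> simp [hne, h]
    exact Finset.sum_eq_zero fun q hq =>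
      mul_eq_zero_of_right _ (epsVec_eq_zero_of_not_injective r s (non_injective q hq))
  · have hg : (f ∘ swap i j) i < (f ∘ swap i j) j := by simpa using h
    have hε := epsVec_comp_swap r s hij hg
    rw [comp_assoc, ← Perm.coe_mul, Equiv.swap_mul_self, Perm.coe_one, comp_id] at hε
    rw [Finset.sum_pair fun e => h.ne' (Prod.ext_iff.1 e).1, Prod.swap, update_eq_self,
      update_eq_self, update_swap, Pplus_apply_self_of_gt r s h, Pplus_apply_swap_of_gt r s h, hε]
    field_simp
    ring

/-- the vector `|ε⟩` satisfies `P⁺_{k,k+1} |ε⟩ = 0` for all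
`k = 1, …, n-1` (0-based: `k + 1 < n`). -/
theorem stmt7 (n : ℕ) (r s : ℂ) (hr : r ≠ 0) (hs : s ≠ 0) (hrs : r + s ≠ 0)
    (k : ℕ) (hk : k + 1 < n) :
    Matrix.mulVec (liftAt n k hk (Pplus n r s)) (epsVec n r s) = 0 :=
  stmt7_general n r s hr k hk
end

section
/- In A(R), for any fixed permutation η ∈ Sₙ, the quantum determinant satisfies det_{r,s}T = (−s)^{−ℓ(η)} Σ_{σ∈Sₙ} (−s)^{ℓ(σ)} t_{σ(1),η(1)}⋯t_{σ(n),η(n)}; in particular, for two permutations η, η' ∈ Sₙ, (−s)^{−ℓ(η)} Σ_σ (−s)^{ℓ(σ)} t_{σ(1),η(1)}⋯t_{σ(n),η(n)} = (−s)^{−ℓ(η')} Σ_σ (−s)^{ℓ(σ)} t_{σ(1),η'(1)}⋯t_{σ(n),η'(n)}. -/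
/-- The ordered product `t_{σ(1),η(1)} ⋯ t_{σ(n),η(n)}` in a (noncommutative)
algebra. -/
def prodT {A : Type*} [Ring A] {n : ℕ} (t : Fin n → Fin n → A)
    (σ η : Fin n → Fin n) : A :=
  ((List.finRange n).map fun i => t (σ i) (η i)).prod

/-!
Write `D(η) = Σ_σ (-s)^{ℓ(σ)} t_{σ(1),η(1)} ⋯ t_{σ(n),η(n)}`. Let `τ` be an adjacent
transposition `(k k+1)` with `η(k) < η(k+1)`. Pairing `σ` with `στ` in both `D(ητ)` and `D(η)`,
the paired terms share all factors except those in positions `k, k+1`, and there the RTT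
relations give the `2 × 2` identity `t_ad t_bc - s t_bd t_ac = -s (t_ac t_bd - s t_bc t_ad)`
for `a < b`, `c < d`. Hence `D(ητ) = -s D(η)`, and induction on `ℓ(η)` along adjacent descents
gives `D(η) = (-s)^{ℓ(η)} D(id)`.
-/

open Finset

lemma CovBy.swap_apply_lt_swap_apply {α : Type*} [LinearOrder α] {k k' i j : α}
    (hk : k ⋖ k') (hij : i < j) (hne : (i, j) ≠ (k, k')) :
    Equiv.swap k k' i < Equiv.swap k k' j := by
  have hlt := hk.lt
  have hge : ∀ c, k < c → k' ≤ c := fun _ => hk.ge_of_gt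
  have hle : ∀ c, c < k' → c ≤ k := fun _ => hk.le_of_lt
  rw [Equiv.swap_apply_def, Equiv.swap_apply_def]
  split_ifs <;> grind

lemma CovBy.swap_apply_lt_swap_apply_iff {α : Type*} [LinearOrder α] {k k' i j : α}
    (hk : k ⋖ k') (hne : (i, j) ≠ (k, k')) (hne' : (i, j) ≠ (k', k)) :
    Equiv.swap k k' i < Equiv.swap k k' j ↔ i < j := by
  refine ⟨fun h => ?_, fun h => hk.swap_apply_lt_swap_apply h hne⟩
  simpa using hk.swap_apply_lt_swap_apply h (by simpa [Equiv.swap_apply_eq_iff] using hne')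

lemma exists_list_prod_finRange_eq_mul_mul {A : Type*} [Monoid A] {n : ℕ} {k k' : Fin n}
    (hk : k ⋖ k') (u₀ : Fin n → A) :
    ∃ L R : A, ∀ u : Fin n → A, (∀ i, i ≠ k → i ≠ k' → u i = u₀ i) →
      ((List.finRange n).map u).prod = L * (u k * u k') * R := by
  have hkk' : (k : ℕ) + 1 = k' := by simpa using hk
  set l := List.finRange n
  have hsplit : l = l.take k ++ k :: k' :: l.drop (k + 2) := by
    conv_lhs => rw [← List.take_append_drop k l, List.drop_eq_getElem_cons (by simp [l]),
      List.drop_eq_getElem_cons (by simp [l]; omega)]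
    simp [l, hkk']
    omega
  refine ⟨((l.take k).map u₀).prod, ((l.drop (k + 2)).map u₀).prod, fun u hu => ?_⟩
  have hout : ∀ i ∈ l.take k ++ l.drop (k + 2), u i = u₀ i := by
    intro i hi
    simp only [List.mem_append, List.mem_take_iff_getElem, List.mem_drop_iff_getElem, l,
      List.getElem_finRange] at hi
    apply hu <;> rintro rfl <;> rcases hi with ⟨j, hj, hji⟩ | ⟨j, hj, hji⟩ <;>
      simp [Fin.ext_iff] at hji <;> omega
  conv_lhs => rw [hsplit]
  rw [List.map_append, List.map_cons, List.map_cons, List.prod_append, List.prod_cons,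
    List.prod_cons, List.map_congr_left fun i hi => hout i (List.mem_append_left _ hi),
    List.map_congr_left fun i hi => hout i (List.mem_append_right _ hi), mul_assoc, mul_assoc]

lemma Fintype.sum_eq_sum_filter_add_mul {G M : Type*} [Group G] [Fintype G] [AddCommMonoid M]
    (τ : G) (P : G → Prop) [DecidablePred P] (hP : ∀ g, P (g * τ) ↔ ¬P g) (f : G → M) :
    ∑ g, f g = ∑ g with P g, (f g + f (g * τ)) := by
  rw [sum_add_distrib, ← sum_filter_add_sum_filter_not univ P f]
  congr 1
  rw [sum_filter, sum_filter, ← Equiv.sum_comp (Equiv.mulRight τ)]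
  simp only [Equiv.coe_mulRight, hP, not_not]

lemma Equiv.Perm.exists_covBy_apply_lt {α : Type*} [LinearOrder α] [Finite α] [SuccOrder α]
    [IsSuccArchimedean α] {η : Equiv.Perm α} (h : η ≠ 1) : ∃ k k', k ⋖ k' ∧ η k' < η k := by
  by_contra! hmono
  have : StrictMono η := strictMono_of_lt_succ fun a ha =>
    have hcov := Order.covBy_succ_of_not_isMax ha
    (hmono _ _ hcov).lt_of_ne (η.injective.ne hcov.ne)
  exact h (Equiv.ext fun a => this.apply_eq)

lemma invNum_one {n : ℕ} : invNum (1 : Equiv.Perm (Fin n)) = 0 :=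
  card_eq_zero.2 (filter_false_of_mem fun _ _ h => lt_asymm h.1 h.2)

lemma invNum_mul_swap_s9 {n : ℕ} {σ : Equiv.Perm (Fin n)} {k k' : Fin n} (hk : k ⋖ k')
    (h : σ k < σ k') : invNum (σ * Equiv.swap k k') = invNum σ + 1 := by
  set τ := Equiv.swap k k'
  have hinv : (univ.filter fun p : Fin n × Fin n => p.1 < p.2 ∧ (σ * τ) p.2 < (σ * τ) p.1) =
      insert (k, k') ((univ.filter fun p : Fin n × Fin n => p.1 < p.2 ∧ σ p.2 < σ p.1).map
        (τ.prodCongr τ).toEmbedding) := by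
    ext ⟨i, j⟩
    rw [mem_filter, mem_insert, mem_map_equiv]
    simp only [mem_filter, mem_univ, true_and, Equiv.prodCongr_symm, Equiv.symm_swap,
      Equiv.prodCongr_apply, Prod.map, Equiv.Perm.mul_apply, τ]
    by_cases e : (i, j) = (k, k')
    · obtain ⟨rfl, rfl⟩ := Prod.mk.inj e
      simp [hk.lt, h]
    by_cases e' : (i, j) = (k', k)
    · obtain ⟨rfl, rfl⟩ := Prod.mk.inj e'
      simp [lt_asymm hk.lt, lt_asymm h, hk.lt.ne']
    rw [hk.swap_apply_lt_swap_apply_iff e e']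
    simp [e]
  rw [invNum, hinv, card_insert_of_notMem, card_map]
  · rfl
  · simp [τ, mem_map_equiv, lt_asymm hk.lt]

lemma sum_Rmat_row_smul {M : Type*} [AddCommMonoid M] [Module ℂ M] {n : ℕ} (r s : ℂ)
    (f : Fin n → Fin n → M) (i j : Fin n) :
    ∑ a : Fin n, ∑ b : Fin n, Rmat n r s (i, j) (a, b) • f a b =
      (if i = j then s else if j < i then r * s else 1) • f i j
        + (if j < i then (s - r) • f j i else 0) := by
  simp only [Rmat, Prod.mk.injEq, add_smul, sum_add_distrib, ite_and, ite_smul, zero_smul,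
    sum_ite_eq', mem_univ, if_true, sum_ite_irrel, sum_const_zero]

lemma sum_Rmat_col_smul {M : Type*} [AddCommMonoid M] [Module ℂ M] {n : ℕ} (r s : ℂ)
    (f : Fin n → Fin n → M) (k l : Fin n) :
    ∑ a : Fin n, ∑ b : Fin n, Rmat n r s (a, b) (k, l) • f a b =
      (if k = l then s else if l < k then r * s else 1) • f k l
        + (if k < l then (s - r) • f l k else 0) := by
  simp only [Rmat, Prod.mk.injEq, add_smul, sum_add_distrib, ite_and, ite_smul, zero_smul,
    sum_ite_eq, mem_univ, if_true, sum_ite_irrel, sum_const_zero]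

/-- The relations `R T₁ T₂ = T₂ T₁ R` of `A(R)`, written entrywise. -/
def SatisfiesRTT {A : Type*} [Ring A] [Algebra ℂ A] {n : ℕ} (r s : ℂ)
    (t : Fin n → Fin n → A) : Prop :=
  ∀ i j k l : Fin n,
    ∑ a : Fin n, ∑ b : Fin n, Rmat n r s (i, j) (a, b) • (t a k * t b l)
      = ∑ a : Fin n, ∑ b : Fin n, Rmat n r s (a, b) (k, l) • (t j b * t i a)

namespace SatisfiesRTT

variable {A : Type*} [Ring A] [Algebra ℂ A] {n : ℕ} {r s : ℂ} {t : Fin n → Fin n → A}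
  {a b c d k k' : Fin n}

lemma mul_eq_mul_add (h : SatisfiesRTT r s t) (hab : a < b) (hcd : c < d) :
    t a c * t b d = t b d * t a c + (s - r) • (t b c * t a d) := by
  simpa [sum_Rmat_row_smul, sum_Rmat_col_smul, hab.ne, lt_asymm hab, hcd.ne, lt_asymm hcd, hcd]
    using h a b c d

lemma mul_eq_smul_mul (h : SatisfiesRTT r s t) (hab : a < b) (hcd : c < d) :
    t a d * t b c = (r * s) • (t b c * t a d) := by
  simpa [sum_Rmat_row_smul, sum_Rmat_col_smul, hab.ne, lt_asymm hab, hcd.ne', lt_asymm hcd, hcd]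
    using h a b d c

lemma minor_swap_cols (h : SatisfiesRTT r s t) (hab : a < b) (hcd : c < d) :
    t a d * t b c + (-s) • (t b d * t a c)
      = (-s) • (t a c * t b d + (-s) • (t b c * t a d)) := by
  rw [h.mul_eq_smul_mul hab hcd, h.mul_eq_mul_add hab hcd]
  module

lemma pair_mul_swap (h : SatisfiesRTT r s t) (hk : k ⋖ k') {σ η : Equiv.Perm (Fin n)}
    (hσ : σ k < σ k') (hη : η k < η k') :
    (-s) ^ invNum σ • prodT t σ ⇑(η * Equiv.swap k k')
        + (-s) ^ invNum (σ * Equiv.swap k k') •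
          prodT t ⇑(σ * Equiv.swap k k') ⇑(η * Equiv.swap k k')
      = (-s) • ((-s) ^ invNum σ • prodT t σ η
        + (-s) ^ invNum (σ * Equiv.swap k k') • prodT t ⇑(σ * Equiv.swap k k') η) := by
  obtain ⟨L, R, hLR⟩ := exists_list_prod_finRange_eq_mul_mul hk fun i => t (σ i) (η i)
  have e1 : prodT t σ ⇑(η * Equiv.swap k k') = L * (t (σ k) (η k') * t (σ k') (η k)) * R := by
    rw [prodT, hLR _ fun i hi hi' => by simp [Equiv.swap_apply_of_ne_of_ne hi hi']]
    simp
  have e2 : prodT t ⇑(σ * Equiv.swap k k') ⇑(η * Equiv.swap k k')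
      = L * (t (σ k') (η k') * t (σ k) (η k)) * R := by
    rw [prodT, hLR _ fun i hi hi' => by simp [Equiv.swap_apply_of_ne_of_ne hi hi']]
    simp
  have e3 : prodT t σ η = L * (t (σ k) (η k) * t (σ k') (η k')) * R :=
    hLR _ fun _ _ _ => rfl
  have e4 : prodT t ⇑(σ * Equiv.swap k k') η = L * (t (σ k') (η k) * t (σ k) (η k')) * R := by
    rw [prodT, hLR _ fun i hi hi' => by simp [Equiv.swap_apply_of_ne_of_ne hi hi']]
    simp
  have key := congrArg (L * · * R) (h.minor_swap_cols hσ hη)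
  simp only [mul_add, add_mul, mul_smul_comm, smul_mul_assoc] at key
  rw [e1, e2, e3, e4, invNum_mul_swap_s9 hk hσ, pow_succ]
  linear_combination (norm := module) (-s) ^ invNum σ • key

lemma sum_prodT_mul_swap (h : SatisfiesRTT r s t) (hk : k ⋖ k') {η : Equiv.Perm (Fin n)}
    (hη : η k < η k') :
    ∑ σ : Equiv.Perm (Fin n), (-s) ^ invNum σ • prodT t σ ⇑(η * Equiv.swap k k')
      = (-s) • ∑ σ : Equiv.Perm (Fin n), (-s) ^ invNum σ • prodT t σ η := by
  have hP (σ : Equiv.Perm (Fin n)) :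
      (σ * Equiv.swap k k') k < (σ * Equiv.swap k k') k' ↔ ¬σ k < σ k' := by
    simpa using (σ.injective.ne hk.lt.ne').le_iff_lt.symm
  rw [Fintype.sum_eq_sum_filter_add_mul _ (fun σ => σ k < σ k') hP,
    Fintype.sum_eq_sum_filter_add_mul _ (fun σ => σ k < σ k') hP, smul_sum]
  exact sum_congr rfl fun σ hσ => h.pair_mul_swap hk (mem_filter.1 hσ).2 hη

theorem sum_prodT_perm (h : SatisfiesRTT r s t) (η : Equiv.Perm (Fin n)) :
    ∑ σ : Equiv.Perm (Fin n), (-s) ^ invNum σ • prodT t σ η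
      = (-s) ^ invNum η • ∑ σ : Equiv.Perm (Fin n), (-s) ^ invNum σ • prodT t σ id := by
  induction hN : invNum η using Nat.strong_induction_on generalizing η with
  | _ N ih =>
    subst hN
    by_cases hη : η = 1
    · subst hη
      simp [invNum_one]
    obtain ⟨k, k', hk, hlt⟩ := η.exists_covBy_apply_lt hη
    set η' := η * Equiv.swap k k'
    have hη' : η' k < η' k' := by simpa [η'] using hlt
    have hη'_swap : η' * Equiv.swap k k' = η := by simp [η', mul_assoc]
    have hinv : invNum η = invNum η' + 1 := hη'_swap ▸ invNum_mul_swap_s9 hk hη'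
    calc ∑ σ : Equiv.Perm (Fin n), (-s) ^ invNum σ • prodT t σ η
        = (-s) • ∑ σ : Equiv.Perm (Fin n), (-s) ^ invNum σ • prodT t σ η' := by
          rw [← h.sum_prodT_mul_swap hk hη', hη'_swap]
      _ = (-s) ^ invNum η • ∑ σ : Equiv.Perm (Fin n), (-s) ^ invNum σ • prodT t σ id := by
          rw [ih _ (by omega) η' rfl, smul_smul, hinv, pow_succ']

end SatisfiesRTT

theorem stmt9_general {A : Type*} [Ring A] [Algebra ℂ A] (n : ℕ) (r s : ℂ)
    (hs : s ≠ 0) (t : Fin n → Fin n → A)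
    (hRTT : ∀ i j k l : Fin n,
      ∑ a : Fin n, ∑ b : Fin n, Rmat n r s (i, j) (a, b) • (t a k * t b l)
        = ∑ a : Fin n, ∑ b : Fin n, Rmat n r s (a, b) (k, l) • (t j b * t i a)) :
    ∀ η : Equiv.Perm (Fin n),
      ∑ σ : Equiv.Perm (Fin n), ((-s) ^ invNum σ) • prodT t σ id
        = ((-s) ^ (-(invNum η : ℤ))) •
            ∑ σ : Equiv.Perm (Fin n), ((-s) ^ invNum σ) • prodT t σ η := by
  intro η
  rw [SatisfiesRTT.sum_prodT_perm hRTT η, smul_smul, zpow_neg, zpow_natCast,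
    inv_mul_cancel₀ (pow_ne_zero _ (neg_ne_zero.2 hs)), one_smul]

/-- in `A(R)` (generators `t_{ij}` with RTT relations
`Σ_{a,b} R^{ij}_{ab} t_{ak} t_{bl} = Σ_{a,b} R^{ab}_{kl} t_{jb} t_{ia}` for the
two-parameter R-matrix), for any fixed `η ∈ Sₙ` the quantum determinant
`det_{r,s}T = Σ_{σ}(-s)^{ℓ(σ)} t_{σ(1),1}⋯t_{σ(n),n}` equals
`(-s)^{-ℓ(η)} Σ_{σ}(-s)^{ℓ(σ)} t_{σ(1),η(1)}⋯t_{σ(n),η(n)}`; in particular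
this expression is independent of `η`. -/
theorem stmt9 {A : Type*} [Ring A] [Algebra ℂ A] (n : ℕ) (r s : ℂ)
    (hr : r ≠ 0) (hs : s ≠ 0) (t : Fin n → Fin n → A)
    (hRTT : ∀ i j k l : Fin n,
      ∑ a : Fin n, ∑ b : Fin n, Rmat n r s (i, j) (a, b) • (t a k * t b l)
        = ∑ a : Fin n, ∑ b : Fin n, Rmat n r s (a, b) (k, l) • (t j b * t i a)) :
    ∀ η : Equiv.Perm (Fin n),
      ∑ σ : Equiv.Perm (Fin n), ((-s) ^ invNum σ) • prodT t σ id
        = ((-s) ^ (-(invNum η : ℤ))) •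
            ∑ σ : Equiv.Perm (Fin n), ((-s) ^ invNum σ) • prodT t σ η :=
  stmt9_general n r s hs t hRTT
end

section
/- In A(R), the row and column expansions of the quantum determinant agree: Σ_{σ∈Sₙ} (−s)^{ℓ(σ)} t_{σ(1),1}⋯t_{σ(n),n} = Σ_{σ∈Sₙ} (−r)^{−ℓ(σ)} t_{1,σ(1)}⋯t_{n,σ(n)}. -/
open Equiv Finset

def AntidiagCommute {K A : Type*} [CommSemiring K] [Semiring A] [Module K A] (q : K)
    {m n : ℕ} (t : Fin m → Fin n → A) : Prop :=
  ∀ ⦃a b : Fin m⦄ ⦃c d : Fin n⦄, a < b → c < d → t a d * t b c = q • (t b c * t a d)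

theorem AntidiagCommute.comp {K A : Type*} [CommSemiring K] [Semiring A] [Module K A]
    {q : K} {m n m' n' : ℕ} {t : Fin m → Fin n → A} (ht : AntidiagCommute q t)
    {f : Fin m' → Fin m} {g : Fin n' → Fin n} (hf : StrictMono f) (hg : StrictMono g) :
    AntidiagCommute q fun i j => t (f i) (g j) :=
  fun _ _ _ _ hab hcd => ht (hf hab) (hg hcd)

theorem antidiagCommute_of_RTT {A : Type*} [Ring A] [Algebra ℂ A] {n : ℕ} {r s : ℂ}
    {t : Fin n → Fin n → A}
    (hRTT : ∀ i j k l : Fin n,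
      ∑ a : Fin n, ∑ b : Fin n, Rmat n r s (i, j) (a, b) • (t a k * t b l)
        = ∑ a : Fin n, ∑ b : Fin n, Rmat n r s (a, b) (k, l) • (t j b * t i a)) :
    AntidiagCommute (r * s) t := by
  intro a b c d hab hcd
  simpa [Rmat, add_smul, ite_smul, sum_add_distrib, Prod.ext_iff, hab.ne, hab.not_gt, hcd.ne',
    hcd, hcd.not_gt, ite_and, sum_ite_eq, sum_ite_eq'] using hRTT a b d c

theorem List.prod_ofFn_eq_pow_smul_mul {K A : Type*} [CommSemiring K] [Semiring A]
    [Algebra K A] {n : ℕ} (g : Fin (n + 1) → A) (p : Fin (n + 1)) (q : K)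
    (h : ∀ i < p, g i * g p = q • (g p * g i)) :
    (List.ofFn g).prod = q ^ (p : ℕ) • (g p * (List.ofFn fun k => g (p.succAbove k)).prod) := by
  induction n with
  | zero =>
    obtain rfl := Fin.fin_one_eq_zero p
    simp
  | succ n ih =>
    cases p using Fin.cases with
    | zero => simp [List.ofFn_succ]
    | succ p =>
      have h' : ∀ i < p, g i.succ * g p.succ = q • (g p.succ * g i.succ) :=
        fun i hi => h i.succ (Fin.succ_lt_succ_iff.2 hi)
      rw [List.ofFn_succ, List.prod_cons, ih (fun i => g i.succ) p h', List.ofFn_succ,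
        List.prod_cons, mul_smul_comm, ← mul_assoc, h 0 p.succ_pos, smul_mul_assoc, smul_smul,
        ← pow_succ, mul_assoc]
      simp

def consPerm {n : ℕ} (p : Fin (n + 1)) (e : Perm (Fin n)) : Perm (Fin (n + 1)) :=
  (finSuccEquiv n).trans ((Equiv.optionCongr e).trans (finSuccEquiv' p).symm)

@[simp] theorem consPerm_zero {n : ℕ} (p : Fin (n + 1)) (e : Perm (Fin n)) :
    consPerm p e 0 = p := by
  simp [consPerm]

@[simp] theorem consPerm_succ {n : ℕ} (p : Fin (n + 1)) (e : Perm (Fin n)) (i : Fin n) :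
    consPerm p e i.succ = p.succAbove (e i) := by
  simp [consPerm]

theorem consPerm_inv_self {n : ℕ} (p : Fin (n + 1)) (e : Perm (Fin n)) :
    (consPerm p e)⁻¹ p = 0 :=
  Perm.inv_eq_iff_eq.2 (consPerm_zero p e).symm

theorem consPerm_inv_succAbove {n : ℕ} (p : Fin (n + 1)) (e : Perm (Fin n)) (k : Fin n) :
    (consPerm p e)⁻¹ (p.succAbove k) = (e⁻¹ k).succ :=
  Perm.inv_eq_iff_eq.2 (by simp)

theorem bijective_consPerm {n : ℕ} :
    Function.Bijective fun x : Fin (n + 1) × Perm (Fin n) => consPerm x.1 x.2 := by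
  refine (Fintype.bijective_iff_injective_and_card _).2
    ⟨?_, by simp [Fintype.card_perm, Nat.factorial_succ]⟩
  rintro ⟨p, e⟩ ⟨p', e'⟩ h
  have hp : p = p' := by simpa using congr($h 0)
  subst hp
  have he : e = e' := Perm.ext fun i =>
    Fin.succAbove_right_injective (p := p) (by simpa using congr($h i.succ))
  rw [he]

theorem sum_perm_succ_eq_sum_consPerm {M : Type*} [AddCommMonoid M] {n : ℕ}
    (f : Perm (Fin (n + 1)) → M) :
    ∑ σ, f σ = ∑ p, ∑ e, f (consPerm p e) := by
  rw [← Fintype.sum_prod_type']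
  exact (Fintype.sum_bijective _ bijective_consPerm _ _ fun _ => rfl).symm

theorem invNum_inv {n : ℕ} (σ : Perm (Fin n)) : invNum σ⁻¹ = invNum σ := by
  refine card_nbij' (fun x => (σ⁻¹ x.2, σ⁻¹ x.1)) (fun x => (σ x.2, σ x.1)) ?_ ?_ ?_ ?_ <;>
    intro x hx <;> simp_all

theorem invNum_eq_sum {n : ℕ} (σ : Perm (Fin n)) :
    invNum σ = ∑ x, #{y | x < y ∧ σ y < σ x} := by
  rw [invNum, ← univ_product_univ, card_eq_sum_ones, sum_filter, sum_product]
  simp_rw [← sum_filter, ← card_eq_sum_ones]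

theorem invNum_consPerm {n : ℕ} (p : Fin (n + 1)) (e : Perm (Fin n)) :
    invNum (consPerm p e) = p + invNum e := by
  rw [invNum_eq_sum, invNum_eq_sum, Fin.sum_univ_succ]
  congr 1
  · set σ := consPerm p e
    calc #{y | 0 < y ∧ σ y < σ 0} = #{y | σ y < σ 0} := by
          refine congrArg card (filter_congr fun y _ => and_iff_right_of_imp fun hy => ?_)
          exact Fin.pos_iff_ne_zero.2 fun h => (h ▸ hy).false
      _ = #{z | z < p} := card_equiv σ (by simp [σ])
      _ = p := by simp [filter_gt_eq_Iio]
  · refine sum_congr rfl fun i _ => ?_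
    rw [← card_map (Fin.succEmb n)]
    congr 1
    ext y
    cases y using Fin.cases <;> simp

section Expansion

variable {K A : Type*} [Field K] [Ring A] [Algebra K A]

theorem prodT_eq_prod_ofFn {n : ℕ} (t : Fin n → Fin n → A) (σ η : Fin n → Fin n) :
    prodT t σ η = (List.ofFn fun i => t (σ i) (η i)).prod := by
  rw [prodT, List.ofFn_eq_map]

theorem prodT_id_consPerm {n : ℕ} (t : Fin (n + 1) → Fin (n + 1) → A) (p : Fin (n + 1))
    (e : Perm (Fin n)) :
    prodT t id (consPerm p e) = t 0 p * prodT (fun i j => t i.succ (p.succAbove j)) id e := by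
  rw [prodT_eq_prod_ofFn, prodT_eq_prod_ofFn, List.ofFn_succ]
  simp

theorem prodT_consPerm_inv_id {n : ℕ} {q : K} (hq : q ≠ 0)
    {t : Fin (n + 1) → Fin (n + 1) → A} (ht : AntidiagCommute q t) (p : Fin (n + 1))
    (e : Perm (Fin n)) :
    prodT t ⇑(consPerm p e)⁻¹ id
      = q⁻¹ ^ (p : ℕ) • (t 0 p * prodT (fun i j => t i.succ (p.succAbove j)) ⇑e⁻¹ id) := by
  rw [prodT_eq_prod_ofFn, prodT_eq_prod_ofFn, List.prod_ofFn_eq_pow_smul_mul _ p q⁻¹]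
  · simp [consPerm_inv_self, consPerm_inv_succAbove]
  · intro i hi
    have hpos : 0 < (consPerm p e)⁻¹ i := by
      rw [Fin.pos_iff_ne_zero, ← consPerm_inv_self p e]
      exact (consPerm p e)⁻¹.injective.ne hi.ne
    simp only [consPerm_inv_self, id, ht hpos hi, smul_smul, inv_mul_cancel₀ hq, one_smul]

def rowDet (s : K) {n : ℕ} (t : Fin n → Fin n → A) : A :=
  ∑ σ : Perm (Fin n), (-s) ^ invNum σ • prodT t σ id

def colDet (r : K) {n : ℕ} (t : Fin n → Fin n → A) : A :=
  ∑ σ : Perm (Fin n), (-r) ^ (-(invNum σ : ℤ)) • prodT t id σ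

theorem rowDet_eq_sum_inv (s : K) {n : ℕ} (t : Fin n → Fin n → A) :
    rowDet s t = ∑ σ : Perm (Fin n), (-s) ^ invNum σ • prodT t ⇑σ⁻¹ id :=
  Fintype.sum_equiv (Equiv.inv _) _ _ fun σ => by simp [invNum_inv]

theorem colDet_succ (r : K) {n : ℕ} (t : Fin (n + 1) → Fin (n + 1) → A) :
    colDet r t = ∑ p : Fin (n + 1),
      (-r)⁻¹ ^ (p : ℕ) • (t 0 p * colDet r fun i j => t i.succ (p.succAbove j)) := by
  simp only [colDet]
  rw [sum_perm_succ_eq_sum_consPerm]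
  refine sum_congr rfl fun p _ => ?_
  rw [mul_sum, smul_sum]
  refine sum_congr rfl fun e _ => ?_
  rw [invNum_consPerm, prodT_id_consPerm, mul_smul_comm, smul_smul]
  congr 1
  rw [zpow_neg, zpow_neg, zpow_natCast, zpow_natCast, pow_add, mul_inv, inv_pow]

theorem rowDet_succ {r s : K} (hr : r ≠ 0) (hs : s ≠ 0) {n : ℕ}
    {t : Fin (n + 1) → Fin (n + 1) → A} (ht : AntidiagCommute (r * s) t) :
    rowDet s t = ∑ p : Fin (n + 1),
      (-r)⁻¹ ^ (p : ℕ) • (t 0 p * rowDet s fun i j => t i.succ (p.succAbove j)) := by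
  rw [rowDet_eq_sum_inv, sum_perm_succ_eq_sum_consPerm]
  refine sum_congr rfl fun p _ => ?_
  rw [rowDet_eq_sum_inv _ (fun i j => t i.succ (p.succAbove j)), mul_sum, smul_sum]
  refine sum_congr rfl fun e _ => ?_
  rw [invNum_consPerm, prodT_consPerm_inv_id (mul_ne_zero hr hs) ht, mul_smul_comm, smul_smul,
    smul_smul]
  congr 1
  have hcoeff : -s * (r * s)⁻¹ = (-r)⁻¹ := by field_simp
  rw [pow_add, mul_right_comm, ← mul_pow, hcoeff]

theorem rowDet_eq_colDet {r s : K} (hr : r ≠ 0) (hs : s ≠ 0) :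
    ∀ {n : ℕ} {t : Fin n → Fin n → A}, AntidiagCommute (r * s) t → rowDet s t = colDet r t
  | 0, t, _ => by simp [rowDet, colDet, invNum, prodT]
  | n + 1, t, ht => by
    rw [rowDet_succ hr hs ht, colDet_succ]
    refine sum_congr rfl fun p _ => ?_
    rw [rowDet_eq_colDet hr hs (ht.comp Fin.strictMono_succ p.strictMono_succAbove)]

end Expansion

/-- in `A(R)`, the row and column expansions of the quantum
determinant agree:
`Σ_{σ∈Sₙ} (-s)^{ℓ(σ)} t_{σ(1),1}⋯t_{σ(n),n}
  = Σ_{σ∈Sₙ} (-r)^{-ℓ(σ)} t_{1,σ(1)}⋯t_{n,σ(n)}`. -/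
theorem stmt10 {A : Type*} [Ring A] [Algebra ℂ A] (n : ℕ) (r s : ℂ)
    (hr : r ≠ 0) (hs : s ≠ 0) (t : Fin n → Fin n → A)
    (hRTT : ∀ i j k l : Fin n,
      ∑ a : Fin n, ∑ b : Fin n, Rmat n r s (i, j) (a, b) • (t a k * t b l)
        = ∑ a : Fin n, ∑ b : Fin n, Rmat n r s (a, b) (k, l) • (t j b * t i a)) :
    ∑ σ : Equiv.Perm (Fin n), ((-s) ^ invNum σ) • prodT t σ id
      = ∑ σ : Equiv.Perm (Fin n), ((-r) ^ (-(invNum σ : ℤ))) • prodT t id σ :=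
  rowDet_eq_colDet hr hs (antidiagCommute_of_RTT hRTT)
end

section
/- In U(R), the Gauss components satisfy K⁺ᵢE_{i,i+1} = r·E_{i,i+1}K⁺ᵢ, K⁺ᵢE_{i−1,i} = s·E_{i−1,i}K⁺ᵢ, and K⁺ᵢE_{j,j+1} = E_{j,j+1}K⁺ᵢ for j ≠ i, i−1. -/
/-- The two-parameter R-matrix `R⁽⁺⁾ = PRP
 = s Σ_i e_{ii}⊗e_{ii} + rs Σ_{i<j} e_{ii}⊗e_{jj} + Σ_{i>j} e_{ii}⊗e_{jj}
 + (s-r) Σ_{i<j} e_{ij}⊗e_{ji}`. -/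
noncomputable def Rp (n : ℕ) (r s : ℂ) :
    Matrix (Fin n × Fin n) (Fin n × Fin n) ℂ := fun p q =>
  (if q = p then (if p.1 = p.2 then s else if p.1 < p.2 then r * s else 1) else 0)
    + (if q = (p.2, p.1) ∧ p.1 < p.2 then s - r else 0)

private lemma sumL {A : Type*} [Ring A] [Algebra ℂ A] (n : ℕ) (r s : ℂ) (i j : Fin n)
    (f : Fin n → Fin n → A) :
    ∑ a : Fin n, ∑ b : Fin n, Rp n r s (i, j) (a, b) • f a b
      = (if i = j then s else if i < j then r * s else 1) • f i j
        + (if i < j then (s - r) • f j i else 0) := by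
  simp only [Rp, add_smul, ite_smul, zero_smul, Finset.sum_add_distrib, Prod.mk.injEq,
    ite_and, Finset.sum_ite_irrel, Finset.sum_const_zero, Finset.sum_ite_eq',
    Finset.sum_ite_eq, Finset.mem_univ, if_true]

private lemma sumR {A : Type*} [Ring A] [Algebra ℂ A] (n : ℕ) (r s : ℂ) (k l : Fin n)
    (g : Fin n → Fin n → A) :
    ∑ a : Fin n, ∑ b : Fin n, Rp n r s (a, b) (k, l) • g a b
      = (if k = l then s else if k < l then r * s else 1) • g k l
        + (if l < k then (s - r) • g l k else 0) := by
  simp only [Rp, add_smul, ite_smul, zero_smul, Finset.sum_add_distrib, Prod.mk.injEq,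
    ite_and, Finset.sum_ite_irrel, Finset.sum_const_zero, Finset.sum_ite_eq',
    Finset.sum_ite_eq, Finset.mem_univ, if_true]

private lemma cancelC {A : Type*} [Ring A] [Algebra ℂ A] (c : ℂ) (hc : c ≠ 0) {x y : A}
    (h : c • x = c • y) : x = y := by
  have := congrArg (fun z => c⁻¹ • z) h
  simpa [smul_smul, inv_mul_cancel₀ hc] using this

/-- in `U(R)` (generators `l⁺_{ij}`, `l⁻_{ij}` with `L⁺` upper
triangular and `L⁻` lower triangular, invertible diagonal entries
`K⁺ᵢ = l⁺_{ii}`, `K⁻ᵢ = l⁻_{ii}`, and RTT relations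
`R⁽⁺⁾L^±₁L^±₂ = L^±₂L^±₁R⁽⁺⁾`, `R⁽⁺⁾L⁺₁L⁻₂ = L⁻₂L⁺₁R⁽⁺⁾` written entrywise),
the Gauss components `E_{ij} = (K⁺ᵢ)⁻¹ l⁺_{ij}` satisfy
`K⁺ᵢ E_{i,i+1} = r E_{i,i+1} K⁺ᵢ`, `K⁺ᵢ E_{i-1,i} = s E_{i-1,i} K⁺ᵢ`, and
`K⁺ᵢ E_{j,j+1} = E_{j,j+1} K⁺ᵢ` for `j ≠ i, i-1`. -/
theorem stmt15 {A : Type*} [Ring A] [Algebra ℂ A] (n : ℕ) (r s : ℂ)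
    (hr : r ≠ 0) (hs : s ≠ 0)
    (lp lm : Fin n → Fin n → A) (kpinv kminv : Fin n → A)
    (hup : ∀ i j : Fin n, j < i → lp i j = 0)
    (hlo : ∀ i j : Fin n, i < j → lm i j = 0)
    (hkp : ∀ i, lp i i * kpinv i = 1 ∧ kpinv i * lp i i = 1)
    (hkm : ∀ i, lm i i * kminv i = 1 ∧ kminv i * lm i i = 1)
    (hpp : ∀ i j k l : Fin n,
      ∑ a : Fin n, ∑ b : Fin n, Rp n r s (i, j) (a, b) • (lp a k * lp b l)
        = ∑ a : Fin n, ∑ b : Fin n, Rp n r s (a, b) (k, l) • (lp j b * lp i a))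
    (hmm : ∀ i j k l : Fin n,
      ∑ a : Fin n, ∑ b : Fin n, Rp n r s (i, j) (a, b) • (lm a k * lm b l)
        = ∑ a : Fin n, ∑ b : Fin n, Rp n r s (a, b) (k, l) • (lm j b * lm i a))
    (hpm : ∀ i j k l : Fin n,
      ∑ a : Fin n, ∑ b : Fin n, Rp n r s (i, j) (a, b) • (lp a k * lm b l)
        = ∑ a : Fin n, ∑ b : Fin n, Rp n r s (a, b) (k, l) • (lm j b * lp i a)) :
    (∀ i j : Fin n, (j : ℕ) = (i : ℕ) + 1 →
      lp i i * (kpinv i * lp i j) = r • ((kpinv i * lp i j) * lp i i)) ∧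
    (∀ i j : Fin n, (i : ℕ) = (j : ℕ) + 1 →
      lp i i * (kpinv j * lp j i) = s • ((kpinv j * lp j i) * lp i i)) ∧
    (∀ i j k : Fin n, (k : ℕ) = (j : ℕ) + 1 → i ≠ j → i ≠ k →
      lp i i * (kpinv j * lp j k) = (kpinv j * lp j k) * lp i i) := by
  -- K⁺ᵢ l⁺_{ij} = r l⁺_{ij} K⁺ᵢ for i < j (row relation)
  have key1 : ∀ i j : Fin n, i < j → lp i i * lp i j = r • (lp i j * lp i i) := by
    intro i j hij
    have h := hpp i i i j
    rw [sumL, sumR] at h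
    simp only [hij, hij.ne, hij.asymm, lt_irrefl, if_true, if_false, ite_true, ite_false,
      eq_self_iff_true, add_zero] at h
    refine cancelC s hs ?_
    rw [h, smul_smul, mul_comm s r]
  -- K⁺ᵢ l⁺_{ji} = s l⁺_{ji} K⁺ᵢ for j < i (column relation)
  have key2 : ∀ i j : Fin n, j < i → lp i i * lp j i = s • (lp j i * lp i i) := by
    intro i j hij
    have h := hpp j i i i
    rw [sumL, sumR] at h
    simp only [hij, hij.ne, hij.asymm, lt_irrefl, if_true, if_false, ite_true, ite_false,
      eq_self_iff_true, add_zero] at h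
    refine cancelC r hr ?_
    calc r • (lp i i * lp j i)
        = s • (lp i i * lp j i) - (s - r) • (lp i i * lp j i) := by
          rw [← sub_smul]; congr 1; ring
      _ = (r * s) • (lp j i * lp i i) := (eq_sub_of_add_eq h).symm
      _ = r • (s • (lp j i * lp i i)) := by rw [smul_smul]
  -- diagonal entries commute
  have keyD : ∀ i j : Fin n, i < j → lp i i * lp j j = lp j j * lp i i := by
    intro i j hij
    have h := hpp i j i j
    rw [sumL, sumR] at h
    simp only [hij, hij.ne, hij.asymm, lt_irrefl, if_true, if_false, ite_true, ite_false,
      eq_self_iff_true, add_zero, hup j i hij, zero_mul, smul_zero] at h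
    exact cancelC (r * s) (mul_ne_zero hr hs) h
  have keyD' : ∀ i j : Fin n, lp i i * lp j j = lp j j * lp i i := by
    intro i j
    rcases lt_trichotomy i j with h | h | h
    · exact keyD i j h
    · rw [h]
    · exact (keyD j i h).symm
  -- hence K⁺ᵢ commutes with (K⁺ⱼ)⁻¹
  have kcomm : ∀ i j : Fin n, kpinv j * lp i i = lp i i * kpinv j := by
    intro i j
    calc kpinv j * lp i i
        = kpinv j * (lp i i * (lp j j * kpinv j)) := by rw [(hkp j).1, mul_one]
      _ = kpinv j * (lp j j * (lp i i * kpinv j)) := by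
          rw [← mul_assoc (lp i i), keyD' i j, mul_assoc]
      _ = (kpinv j * lp j j) * (lp i i * kpinv j) := by rw [mul_assoc]
      _ = lp i i * kpinv j := by rw [(hkp j).2, one_mul]
  -- K⁺ᵢ commutes with l⁺_{j,j+1} when i ∉ {j, j+1}
  have key3 : ∀ i j k : Fin n, (k : ℕ) = (j : ℕ) + 1 → i ≠ j → i ≠ k →
      lp i i * lp j k = lp j k * lp i i := by
    intro i j k hk hij hik
    have hjk : j < k := by rw [Fin.lt_def, hk]; omega
    have h := hpp i j i k
    rw [sumL, sumR] at h
    rcases lt_or_gt_of_ne hij with hlt | hgt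
    · have hik' : i < k := hlt.trans hjk
      simp only [hlt, hik', hlt.ne, hik'.ne, hlt.asymm, hik'.asymm, if_true, if_false,
        ite_true, ite_false, add_zero, hup j i hlt, zero_mul, smul_zero] at h
      exact cancelC (r * s) (mul_ne_zero hr hs) h
    · have hki : k < i := by
        rw [Fin.lt_def]
        have h1 := Fin.lt_def.mp hgt
        have h2 : (i : ℕ) ≠ (k : ℕ) := fun e => hik (Fin.val_injective e)
        omega
      simp only [hgt.asymm, hki.asymm, hij, hik, hki, if_true, if_false, ite_true, ite_false,
        add_zero, hup i k hki, mul_zero, smul_zero, one_smul] at h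
      exact h
  refine ⟨?_, ?_, ?_⟩
  · intro i j hj
    have hij : i < j := by rw [Fin.lt_def, hj]; omega
    calc lp i i * (kpinv i * lp i j)
        = (lp i i * kpinv i) * lp i j := (mul_assoc _ _ _).symm
      _ = lp i j := by rw [(hkp i).1, one_mul]
      _ = (kpinv i * lp i i) * lp i j := by rw [(hkp i).2, one_mul]
      _ = kpinv i * (lp i i * lp i j) := mul_assoc _ _ _
      _ = kpinv i * (r • (lp i j * lp i i)) := by rw [key1 i j hij]
      _ = r • (kpinv i * (lp i j * lp i i)) := mul_smul_comm _ _ _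
      _ = r • (kpinv i * lp i j * lp i i) := by rw [mul_assoc]
  · intro i j hj
    have hij : j < i := by rw [Fin.lt_def, hj]; omega
    calc lp i i * (kpinv j * lp j i)
        = (lp i i * kpinv j) * lp j i := (mul_assoc _ _ _).symm
      _ = (kpinv j * lp i i) * lp j i := by rw [kcomm i j]
      _ = kpinv j * (lp i i * lp j i) := mul_assoc _ _ _
      _ = kpinv j * (s • (lp j i * lp i i)) := by rw [key2 i j hij]
      _ = s • (kpinv j * (lp j i * lp i i)) := mul_smul_comm _ _ _
      _ = s • (kpinv j * lp j i * lp i i) := by rw [mul_assoc]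
  · intro i j k hk hij hik
    calc lp i i * (kpinv j * lp j k)
        = (lp i i * kpinv j) * lp j k := (mul_assoc _ _ _).symm
      _ = (kpinv j * lp i i) * lp j k := by rw [kcomm i j]
      _ = kpinv j * (lp i i * lp j k) := mul_assoc _ _ _
      _ = kpinv j * (lp j k * lp i i) := by rw [key3 i j k hk hij hik]
      _ = kpinv j * lp j k * lp i i := (mul_assoc _ _ _).symm
end

section
/- In U(R), [E_{i,i+1}, F_{j+1,j}] = δ_{ij}(r⁻¹ − s⁻¹)(K⁻_{i+1}(K⁻_i)⁻¹ − K⁺_{i+1}(K⁺_i)⁻¹). -/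
lemma sum_left {A : Type*} [AddCommGroup A] [Module ℂ A] (n : ℕ) (r s : ℂ)
    (i j : Fin n) (f : Fin n → Fin n → A) :
    ∑ a : Fin n, ∑ b : Fin n, Rp n r s (i, j) (a, b) • f a b
      = (if i = j then s else if i < j then r * s else 1) • f i j
        + (if i < j then (s - r) • f j i else 0) := by
  have key : ∀ p : Fin n × Fin n, Rp n r s (i, j) p • f p.1 p.2
      = (if p = (i, j) then (if i = j then s else if i < j then r * s else 1) • f i j else 0)
        + (if p = (j, i) ∧ i < j then (s - r) • f j i else 0) := by
    rintro ⟨a, b⟩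
    rw [Rp, add_smul]
    congr 1
    · by_cases h : (a, b) = (i, j)
      · obtain ⟨rfl, rfl⟩ := Prod.mk.injEq a b i j ▸ h
        simp
      · simp [h]
    · by_cases h : (a, b) = (j, i) ∧ i < j
      · obtain ⟨h1, h2⟩ := h
        obtain ⟨rfl, rfl⟩ := Prod.mk.injEq a b j i ▸ h1
        simp [h2]
      · simp only [h, if_false]
        by_cases h2 : i < j
        · have : ¬((a,b) = (j,i)) := fun hc => h ⟨hc, h2⟩
          simp [this, h2, zero_smul]
        · simp [h2, zero_smul]
  have h0 : ∑ a : Fin n, ∑ b : Fin n, Rp n r s (i, j) (a, b) • f a b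
      = ∑ p : Fin n × Fin n, Rp n r s (i, j) p • f p.1 p.2 :=
    (Fintype.sum_prod_type (fun p : Fin n × Fin n => Rp n r s (i, j) p • f p.1 p.2)).symm
  rw [h0]
  calc ∑ p : Fin n × Fin n, Rp n r s (i,j) p • f p.1 p.2
      = ∑ p : Fin n × Fin n, ((if p = (i, j) then (if i = j then s else if i < j then r * s else 1) • f i j else 0)
        + (if p = (j, i) ∧ i < j then (s - r) • f j i else 0)) := Finset.sum_congr rfl (fun p _ => key p)
    _ = _ := by
        rw [Finset.sum_add_distrib]
        congr 1
        · simp [Finset.sum_ite_eq']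
        · by_cases h2 : i < j
          · simp [h2, Finset.sum_ite_eq']
          · simp [h2]
lemma sum_right {A : Type*} [AddCommGroup A] [Module ℂ A] (n : ℕ) (r s : ℂ)
    (k l : Fin n) (f : Fin n → Fin n → A) :
    ∑ a : Fin n, ∑ b : Fin n, Rp n r s (a, b) (k, l) • f a b
      = (if k = l then s else if k < l then r * s else 1) • f k l
        + (if l < k then (s - r) • f l k else 0) := by
  have key : ∀ p : Fin n × Fin n, Rp n r s p (k, l) • f p.1 p.2
      = (if p = (k, l) then (if k = l then s else if k < l then r * s else 1) • f k l else 0)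
        + (if p = (l, k) ∧ l < k then (s - r) • f l k else 0) := by
    rintro ⟨a, b⟩
    rw [Rp, add_smul]
    congr 1
    · by_cases h : (a, b) = (k, l)
      · obtain ⟨rfl, rfl⟩ := Prod.mk.injEq a b k l ▸ h
        simp
      · have h' : ¬((k, l) = (a, b)) := fun hc => h hc.symm
        simp [h, h']
    · by_cases h : (a, b) = (l, k) ∧ l < k
      · obtain ⟨h1, h2⟩ := h
        obtain ⟨rfl, rfl⟩ := Prod.mk.injEq a b l k ▸ h1
        simp [h2]
      · simp only [h, if_false]
        by_cases h2 : l < k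
        · have h3 : ¬((a, b) = (l, k)) := fun hc => h ⟨hc, h2⟩
          have h4 : ¬((k, l) = (b, a) ∧ a < b) := by
            rintro ⟨hc, hab⟩
            exact h3 (by rw [Prod.mk.injEq] at hc ⊢; exact ⟨hc.2.symm, hc.1.symm⟩)
          rw [if_neg h4, zero_smul]
        · have h4 : ¬((k, l) = (b, a) ∧ a < b) := by
            rintro ⟨hc, hab⟩
            rw [Prod.mk.injEq] at hc
            exact h2 (by rw [hc.2, hc.1]; exact hab)
          rw [if_neg h4, zero_smul]
  have h0 : ∑ a : Fin n, ∑ b : Fin n, Rp n r s (a, b) (k, l) • f a b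
      = ∑ p : Fin n × Fin n, Rp n r s p (k, l) • f p.1 p.2 :=
    (Fintype.sum_prod_type (fun p : Fin n × Fin n => Rp n r s p (k, l) • f p.1 p.2)).symm
  rw [h0]
  calc ∑ p : Fin n × Fin n, Rp n r s p (k, l) • f p.1 p.2
      = ∑ p : Fin n × Fin n, ((if p = (k, l) then (if k = l then s else if k < l then r * s else 1) • f k l else 0)
        + (if p = (l, k) ∧ l < k then (s - r) • f l k else 0)) := Finset.sum_congr rfl (fun p _ => key p)
    _ = _ := by
        rw [Finset.sum_add_distrib]
        congr 1
        · simp [Finset.sum_ite_eq']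
        · by_cases h2 : l < k
          · simp [h2, Finset.sum_ite_eq']
          · simp [h2]

lemma aux_cancel {A : Type*} [AddCommGroup A] [Module ℂ A] {a : ℂ} (ha : a ≠ 0)
    {x y : A} (h : a • x = a • y) : x = y := by
  have := congrArg (fun z => a⁻¹ • z) h
  simpa [smul_smul, inv_mul_cancel₀ ha] using this

lemma aux_conj {A : Type*} [Ring A] [Algebra ℂ A] (a b : ℂ) (X M N : A)
    (h1 : M * N = 1) (h2 : N * M = 1) (h : a • (X * M) = b • (M * X)) :
    a • (N * X) = b • (X * N) := by
  have : N * (a • (X * M)) * N = N * (b • (M * X)) * N := by rw [h]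
  calc a • (N * X) = a • (N * (X * M) * N) := by
        rw [mul_assoc, mul_assoc, h1, mul_one]
    _ = N * (a • (X * M)) * N := by rw [mul_smul_comm, smul_mul_assoc]
    _ = N * (b • (M * X)) * N := this
    _ = b • (N * M * (X * N)) := by
        rw [mul_smul_comm, smul_mul_assoc]
        congr 1
        noncomm_ring
    _ = b • (X * N) := by rw [h2, one_mul]

lemma aux_swap {A : Type*} [Ring A] (X Xi Y : A)
    (hx : X * Xi = 1) (hx' : Xi * X = 1) (h : X * Y = Y * X) : Xi * Y = Y * Xi := by
  calc Xi * Y = Xi * Y * (X * Xi) := by rw [hx, mul_one]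
    _ = Xi * (Y * X) * Xi := by noncomm_ring
    _ = Xi * (X * Y) * Xi := by rw [h]
    _ = (Xi * X) * (Y * Xi) := by noncomm_ring
    _ = Y * Xi := by rw [hx', one_mul]

/-- in `U(R)`, with Gauss components `E_{ij} = (K⁺ᵢ)⁻¹ l⁺_{ij}`,
`F_{ij} = l⁻_{ij}(K⁻ⱼ)⁻¹`, one has
`[E_{i,i+1}, F_{j+1,j}] = δ_{ij}(r⁻¹ - s⁻¹)(K⁻_{i+1}(K⁻ᵢ)⁻¹ - K⁺_{i+1}(K⁺ᵢ)⁻¹)`. -/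
theorem stmt16 {A : Type*} [Ring A] [Algebra ℂ A] (n : ℕ) (r s : ℂ)
    (hr : r ≠ 0) (hs : s ≠ 0)
    (lp lm : Fin n → Fin n → A) (kpinv kminv : Fin n → A)
    (hup : ∀ i j : Fin n, j < i → lp i j = 0)
    (hlo : ∀ i j : Fin n, i < j → lm i j = 0)
    (hkp : ∀ i, lp i i * kpinv i = 1 ∧ kpinv i * lp i i = 1)
    (hkm : ∀ i, lm i i * kminv i = 1 ∧ kminv i * lm i i = 1)
    (hpp : ∀ i j k l : Fin n,
      ∑ a : Fin n, ∑ b : Fin n, Rp n r s (i, j) (a, b) • (lp a k * lp b l)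
        = ∑ a : Fin n, ∑ b : Fin n, Rp n r s (a, b) (k, l) • (lp j b * lp i a))
    (hmm : ∀ i j k l : Fin n,
      ∑ a : Fin n, ∑ b : Fin n, Rp n r s (i, j) (a, b) • (lm a k * lm b l)
        = ∑ a : Fin n, ∑ b : Fin n, Rp n r s (a, b) (k, l) • (lm j b * lm i a))
    (hpm : ∀ i j k l : Fin n,
      ∑ a : Fin n, ∑ b : Fin n, Rp n r s (i, j) (a, b) • (lp a k * lm b l)
        = ∑ a : Fin n, ∑ b : Fin n, Rp n r s (a, b) (k, l) • (lm j b * lp i a)) :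
    ∀ i i' j j' : Fin n, (i' : ℕ) = (i : ℕ) + 1 → (j' : ℕ) = (j : ℕ) + 1 →
      (kpinv i * lp i i') * (lm j' j * kminv j)
          - (lm j' j * kminv j) * (kpinv i * lp i i')
        = if i = j then
            (r⁻¹ - s⁻¹) • (lm i' i' * kminv i - lp i' i' * kpinv i)
          else 0 := by
  have Rpm : ∀ α β γ δ : Fin n,
      (if α = β then s else if α < β then r * s else 1) • (lp α γ * lm β δ)
        + (if α < β then (s - r) • (lp β γ * lm α δ) else 0)
      = (if γ = δ then s else if γ < δ then r * s else 1) • (lm β δ * lp α γ)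
        + (if δ < γ then (s - r) • (lm β γ * lp α δ) else 0) := by
    intro α β γ δ
    have h := hpm α β γ δ
    rwa [sum_left, sum_right] at h
  have Rpp : ∀ α β γ δ : Fin n,
      (if α = β then s else if α < β then r * s else 1) • (lp α γ * lp β δ)
        + (if α < β then (s - r) • (lp β γ * lp α δ) else 0)
      = (if γ = δ then s else if γ < δ then r * s else 1) • (lp β δ * lp α γ)
        + (if δ < γ then (s - r) • (lp β γ * lp α δ) else 0) := by
    intro α β γ δ
    have h := hpp α β γ δ
    rwa [sum_left, sum_right] at h
  have hrs : r * s ≠ 0 := mul_ne_zero hr hs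
  intro i i' j j' hi hj
  have hii' : i < i' := by rw [Fin.lt_def]; omega
  have hjj' : j < j' := by rw [Fin.lt_def]; omega
  have hnei : i ≠ i' := ne_of_lt hii'
  have hnei' : i' ≠ i := (ne_of_lt hii').symm
  have hnlti : ¬ i' < i := not_lt_of_gt hii'
  by_cases hij : i = j
  · -- diagonal case
    subst hij
    have hj'i' : i' = j' := Fin.ext (by omega)
    subst hj'i'
    rw [if_pos rfl]
    -- core relation h1
    have h1 : (r * s) • (lp i i' * lm i' i) + (s - r) • (lp i' i' * lm i i)
        = lm i' i * lp i i' + (s - r) • (lm i' i' * lp i i) := by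
      have h := Rpm i i' i' i
      simp only [if_neg hnei, if_pos hii', if_neg hnei', if_neg hnlti, if_neg (lt_irrefl i), eq_self_iff_true, if_true, one_smul, hlo i i' hii', hup i' i hii', zero_mul, mul_zero, smul_zero, add_zero, zero_add] at h
      exact h
    -- h2 : s • (E * M) = M * E
    have h2 : s • (lp i i' * lm i i) = lm i i * lp i i' := by
      have h := Rpm i i i' i
      simp only [if_neg hnei, if_pos hii', if_neg hnei', if_neg hnlti, if_neg (lt_irrefl i), eq_self_iff_true, if_true, one_smul, hlo i i' hii', hup i' i hii', zero_mul, mul_zero, smul_zero, add_zero, zero_add] at h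
      exact h
    -- h3 : (r*s) • (P * F) = s • (F * P)
    have h3 : (r * s) • (lp i i * lm i' i) = s • (lm i' i * lp i i) := by
      have h := Rpm i i' i i
      simp only [if_neg hnei, if_pos hii', if_neg hnei', if_neg hnlti, if_neg (lt_irrefl i), eq_self_iff_true, if_true, one_smul, hlo i i' hii', hup i' i hii', zero_mul, mul_zero, smul_zero, add_zero, zero_add] at h
      exact h
    -- h4 : P and M commute
    have h4 : lp i i * lm i i = lm i i * lp i i := by
      have h := Rpm i i i i
      simp only [if_neg hnei, if_pos hii', if_neg hnei', if_neg hnlti, if_neg (lt_irrefl i), eq_self_iff_true, if_true, one_smul, hlo i i' hii', hup i' i hii', zero_mul, mul_zero, smul_zero, add_zero, zero_add] at h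
      exact aux_cancel hs h
    -- h5 : P and M' commute
    have h5 : lp i i * lm i' i' = lm i' i' * lp i i := by
      have h := Rpm i i' i i'
      simp only [if_neg hnei, if_pos hii', if_neg hnei', if_neg hnlti, if_neg (lt_irrefl i), eq_self_iff_true, if_true, one_smul, hlo i i' hii', hup i' i hii', zero_mul, mul_zero, smul_zero, add_zero, zero_add] at h
      exact aux_cancel hrs h
    -- h6 : P' and M commute
    have h6 : lp i' i' * lm i i = lm i i * lp i' i' := by
      have h := Rpm i' i i' i
      simp only [if_neg hnei, if_pos hii', if_neg hnei', if_neg hnlti, if_neg (lt_irrefl i), eq_self_iff_true, if_true, one_smul, hlo i i' hii', hup i' i hii', zero_mul, mul_zero, smul_zero, add_zero, zero_add] at h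
      exact h
    -- h7 : P and P' commute
    have h7 : lp i i * lp i' i' = lp i' i' * lp i i := by
      have h := Rpp i i' i i'
      simp only [if_neg hnei, if_pos hii', if_neg hnei', if_neg hnlti, if_neg (lt_irrefl i), eq_self_iff_true, if_true, one_smul, hlo i i' hii', hup i' i hii', zero_mul, mul_zero, smul_zero, add_zero, zero_add] at h
      exact aux_cancel hrs h
    -- inverse commutations
    have hPiM : kpinv i * lm i i = lm i i * kpinv i :=
      aux_swap _ _ _ (hkp i).1 (hkp i).2 h4
    have hKK : kpinv i * kminv i = kminv i * kpinv i :=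
      (aux_swap _ _ _ (hkm i).1 (hkm i).2 hPiM.symm).symm
    have hPiM' : kpinv i * lm i' i' = lm i' i' * kpinv i :=
      aux_swap _ _ _ (hkp i).1 (hkp i).2 h5
    have hPiP' : kpinv i * lp i' i' = lp i' i' * kpinv i :=
      aux_swap _ _ _ (hkp i).1 (hkp i).2 h7
    -- conjugated versions
    have h2' : lp i i' * kminv i = s • (kminv i * lp i i') := by
      have := aux_conj s 1 (lp i i') (lm i i) (kminv i) (hkm i).1 (hkm i).2
        (by rw [one_smul]; exact h2)
      rw [one_smul] at this
      exact this.symm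
    have h3' : kpinv i * lm i' i = r • (lm i' i * kpinv i) := by
      have h := aux_conj s (r * s) (lm i' i) (lp i i) (kpinv i) (hkp i).1 (hkp i).2 h3.symm
      refine aux_cancel hs ?_
      rw [h, smul_smul, mul_comm s r]
    have E1 : kpinv i * (lm i' i * lp i i') * kminv i
        = (r * s) • ((lm i' i * kminv i) * (kpinv i * lp i i')) := by
      calc kpinv i * (lm i' i * lp i i') * kminv i
          = (kpinv i * lm i' i) * (lp i i' * kminv i) := by noncomm_ring
        _ = (r • (lm i' i * kpinv i)) * (s • (kminv i * lp i i')) := by rw [h3', h2']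
        _ = (r * s) • (lm i' i * kpinv i * (kminv i * lp i i')) := by
            rw [smul_mul_assoc, mul_smul_comm, smul_smul]
        _ = (r * s) • ((lm i' i * kminv i) * (kpinv i * lp i i')) := by
            congr 1
            calc lm i' i * kpinv i * (kminv i * lp i i')
                = lm i' i * (kpinv i * kminv i) * lp i i' := by noncomm_ring
              _ = lm i' i * (kminv i * kpinv i) * lp i i' := by rw [hKK]
              _ = lm i' i * kminv i * (kpinv i * lp i i') := by noncomm_ring
    have E2 : kpinv i * (lm i' i' * lp i i) * kminv i = lm i' i' * kminv i := by
      calc kpinv i * (lm i' i' * lp i i) * kminv i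
          = (kpinv i * lm i' i') * lp i i * kminv i := by noncomm_ring
        _ = (lm i' i' * kpinv i) * lp i i * kminv i := by rw [hPiM']
        _ = lm i' i' * ((kpinv i * lp i i) * kminv i) := by noncomm_ring
        _ = lm i' i' * kminv i := by rw [(hkp i).2, one_mul]
    have E3 : kpinv i * (lp i' i' * lm i i) * kminv i = lp i' i' * kpinv i := by
      calc kpinv i * (lp i' i' * lm i i) * kminv i
          = (kpinv i * lp i' i') * (lm i i * kminv i) := by noncomm_ring
        _ = (kpinv i * lp i' i') * 1 := by rw [(hkm i).1]
        _ = lp i' i' * kpinv i := by rw [mul_one, hPiP']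
    have hcore : (r * s) • (lp i i' * lm i' i)
        = lm i' i * lp i i' + (s - r) • (lm i' i' * lp i i)
          - (s - r) • (lp i' i' * lm i i) := by
      rw [eq_sub_iff_add_eq]; exact h1
    refine aux_cancel hrs ?_
    have key : (r * s) • ((kpinv i * lp i i') * (lm i' i * kminv i)
          - (lm i' i * kminv i) * (kpinv i * lp i i'))
        = (s - r) • (lm i' i' * kminv i - lp i' i' * kpinv i) := by
      calc (r * s) • ((kpinv i * lp i i') * (lm i' i * kminv i)
            - (lm i' i * kminv i) * (kpinv i * lp i i'))
          = kpinv i * ((r * s) • (lp i i' * lm i' i)) * kminv i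
            - (r * s) • ((lm i' i * kminv i) * (kpinv i * lp i i')) := by
            rw [smul_sub]
            congr 1
            rw [mul_smul_comm, smul_mul_assoc]
            congr 1
            noncomm_ring
        _ = kpinv i * (lm i' i * lp i i' + (s - r) • (lm i' i' * lp i i)
              - (s - r) • (lp i' i' * lm i i)) * kminv i
            - (r * s) • ((lm i' i * kminv i) * (kpinv i * lp i i')) := by rw [hcore]
        _ = kpinv i * (lm i' i * lp i i') * kminv i
            + (s - r) • (kpinv i * (lm i' i' * lp i i) * kminv i)
            - (s - r) • (kpinv i * (lp i' i' * lm i i) * kminv i)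
            - (r * s) • ((lm i' i * kminv i) * (kpinv i * lp i i')) := by
            simp only [mul_add, add_mul, mul_sub, sub_mul, mul_smul_comm, smul_mul_assoc]
        _ = (r * s) • ((lm i' i * kminv i) * (kpinv i * lp i i'))
            + (s - r) • (lm i' i' * kminv i)
            - (s - r) • (lp i' i' * kpinv i)
            - (r * s) • ((lm i' i * kminv i) * (kpinv i * lp i i')) := by
            rw [E1, E2, E3]
        _ = (s - r) • (lm i' i' * kminv i - lp i' i' * kpinv i) := by
            rw [smul_sub]; abel
    rw [key, smul_smul]
    congr 1
    field_simp
  · -- off-diagonal case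
    rw [if_neg hij]
    rw [sub_eq_zero]
    have hvij : (i : ℕ) ≠ (j : ℕ) := fun h => hij (Fin.ext h)
    -- scalars
    set c : Fin n → Fin n → ℂ := fun a b => if a = b then s else if a < b then r * s else 1 with hc
    have cne : ∀ a b : Fin n, c a b ≠ 0 := by
      intro a b
      rw [hc]
      dsimp only
      split_ifs
      exacts [hs, hrs, one_ne_zero]
    -- G1
    have G1 : c i j • (lp i i' * lm j j) = c i' j • (lm j j * lp i i') := by
      have h := Rpm i j i' j
      have e1 : (if i < j then (s - r) • (lp j i' * lm i j) else 0) = 0 := by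
        by_cases hl : i < j
        · rw [if_pos hl, hlo i j hl]; simp
        · rw [if_neg hl]
      have e2 : (if j < i' then (s - r) • (lm j i' * lp i j) else 0) = 0 := by
        by_cases hl : j < i'
        · rw [if_pos hl, hlo j i' hl]; simp
        · rw [if_neg hl]
      rw [e1, e2, add_zero, add_zero] at h
      exact h
    -- G2
    have G2 : c i j' • (lp i i * lm j' j) = c i j • (lm j' j * lp i i) := by
      have h := Rpm i j' i j
      have e1 : (if i < j' then (s - r) • (lp j' i * lm i j) else 0) = 0 := by
        by_cases hl : i < j'
        · rw [if_pos hl, hup j' i hl]; simp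
        · rw [if_neg hl]
      have e2 : (if j < i then (s - r) • (lm j' i * lp i j) else 0) = 0 := by
        by_cases hl : j < i
        · rw [if_pos hl, hup i j hl]; simp
        · rw [if_neg hl]
      rw [e1, e2, add_zero, add_zero] at h
      exact h
    -- G3 (core)
    have G3 : c i j' • (lp i i' * lm j' j) = c i' j • (lm j' j * lp i i') := by
      have h := Rpm i j' i' j
      have e1 : (if i < j' then (s - r) • (lp j' i' * lm i j) else 0) = 0 := by
        by_cases hl : i < j'
        · have hl2 : i < j := by rw [Fin.lt_def] at hl ⊢; omega
          rw [if_pos hl, hlo i j hl2]; simp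
        · rw [if_neg hl]
      have e2 : (if j < i' then (s - r) • (lm j' i' * lp i j) else 0) = 0 := by
        by_cases hl : j < i'
        · have hl2 : j < i := by rw [Fin.lt_def] at hl ⊢; omega
          rw [if_pos hl, hup i j hl2]; simp
        · rw [if_neg hl]
      rw [e1, e2, add_zero, add_zero] at h
      exact h
    -- G4
    have G4 : lp i i * lm j j = lm j j * lp i i := by
      have h := Rpm i j i j
      have e1 : (if i < j then (s - r) • (lp j i * lm i j) else 0) = 0 := by
        by_cases hl : i < j
        · rw [if_pos hl, hup j i hl]; simp
        · rw [if_neg hl]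
      have e2 : (if j < i then (s - r) • (lm j i * lp i j) else 0) = 0 := by
        by_cases hl : j < i
        · rw [if_pos hl, hup i j hl]; simp
        · rw [if_neg hl]
      rw [e1, e2, add_zero, add_zero] at h
      exact aux_cancel (cne i j) h
    -- inverse versions
    have hPiM : kpinv i * lm j j = lm j j * kpinv i :=
      aux_swap _ _ _ (hkp i).1 (hkp i).2 G4
    have hKK : kpinv i * kminv j = kminv j * kpinv i :=
      (aux_swap _ _ _ (hkm j).1 (hkm j).2 hPiM.symm).symm
    have K1 : c i j • (kminv j * lp i i') = c i' j • (lp i i' * kminv j) :=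
      aux_conj _ _ _ _ _ (hkm j).1 (hkm j).2 G1
    have K2 : c i j • (kpinv i * lm j' j) = c i j' • (lm j' j * kpinv i) :=
      aux_conj _ _ _ _ _ (hkp i).1 (hkp i).2 G2.symm
    refine aux_cancel (mul_ne_zero (cne i j') (cne i j)) ?_
    calc (c i j' * c i j) • ((kpinv i * lp i i') * (lm j' j * kminv j))
        = (c i j * c i j') • (kpinv i * (lp i i' * lm j' j) * kminv j) := by
          rw [mul_comm (c i j') (c i j)]
          congr 1
          noncomm_ring
      _ = c i j • (kpinv i * (c i j' • (lp i i' * lm j' j)) * kminv j) := by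
          rw [mul_smul_comm, smul_mul_assoc, ← mul_smul]
      _ = c i j • (kpinv i * (c i' j • (lm j' j * lp i i')) * kminv j) := by rw [G3]
      _ = (c i j * c i' j) • (kpinv i * (lm j' j * lp i i') * kminv j) := by
          rw [mul_smul_comm, smul_mul_assoc, smul_smul]
      _ = (c i j • (kpinv i * lm j' j)) * (c i' j • (lp i i' * kminv j)) := by
          rw [smul_mul_assoc, mul_smul_comm, smul_smul]
          congr 1
          noncomm_ring
      _ = (c i j' • (lm j' j * kpinv i)) * (c i j • (kminv j * lp i i')) := by
          rw [K2, K1]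
      _ = (c i j' * c i j) • ((lm j' j * kpinv i) * (kminv j * lp i i')) := by
          rw [smul_mul_assoc, mul_smul_comm, smul_smul]
      _ = (c i j' * c i j) • ((lm j' j * kminv j) * (kpinv i * lp i i')) := by
          congr 1
          calc lm j' j * kpinv i * (kminv j * lp i i')
              = lm j' j * (kpinv i * kminv j) * lp i i' := by noncomm_ring
            _ = lm j' j * (kminv j * kpinv i) * lp i i' := by rw [hKK]
            _ = lm j' j * kminv j * (kpinv i * lp i i') := by noncomm_ring
end

section
/- In U(R), the elements E_{i,i+1} satisfy the two-parameter Serre relations E_{i,i+1}²E_{i+1,i+2} − (r+s)E_{i,i+1}E_{i+1,i+2}E_{i,i+1} + rs·E_{i+1,i+2}E_{i,i+1}² = 0 and E_{i,i+1}E_{i+1,i+2}² − (r+s)E_{i+1,i+2}E_{i,i+1}E_{i+1,i+2} + rs·E_{i+1,i+2}²E_{i,i+1} = 0, and E_{i,i+1}E_{j,j+1} = E_{j,j+1}E_{i,i+1} whenever |i−j| > 1. Moreover E_{i+1,i+2}E_{i,i+1} = s⁻¹E_{i,i+1}E_{i+1,i+2} + (r⁻¹−s⁻¹)E_{i,i+2}.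 -/
section Stmt17Aux

variable {n : ℕ} {A : Type*}

section Sums
variable [AddCommMonoid A] [Module ℂ A]

lemma stmt17_sumA (v : ℂ) (M : Fin n → Fin n → A) (i j : Fin n) :
    ∑ a : Fin n, ∑ b : Fin n, (if (a, b) = (i, j) then v else 0) • M a b = v • M i j := by
  rw [← Fintype.sum_prod_type
    (f := fun x : Fin n × Fin n => (if x = (i, j) then v else 0) • M x.1 x.2)]
  simp [ite_smul]

lemma stmt17_sumB (v : ℂ) (M : Fin n → Fin n → A) (j i : Fin n) (P : Prop) [Decidable P] :
    ∑ a : Fin n, ∑ b : Fin n, (if (a, b) = (j, i) ∧ P then v else 0) • M a b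
      = if P then v • M j i else 0 := by
  by_cases hP : P
  · simp only [hP, and_true, if_pos hP]; exact stmt17_sumA v M j i
  · simp [hP]

lemma stmt17_sumC (f : Fin n → Fin n → ℂ) (M : Fin n → Fin n → A) (k l : Fin n) :
    ∑ a : Fin n, ∑ b : Fin n, (if (k, l) = (a, b) then f a b else 0) • M a b
      = f k l • M k l := by
  rw [← Fintype.sum_prod_type
    (f := fun x : Fin n × Fin n => (if (k, l) = x then f x.1 x.2 else 0) • M x.1 x.2)]
  simp [ite_smul]

lemma stmt17_sumD (v : ℂ) (M : Fin n → Fin n → A) (k l : Fin n) :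
    ∑ a : Fin n, ∑ b : Fin n, (if (k, l) = (b, a) ∧ a < b then v else 0) • M a b
      = if l < k then v • M l k else 0 := by
  have hc : ∀ a b : Fin n, ((k, l) = (b, a) ∧ a < b) ↔ ((a, b) = (l, k) ∧ l < k) := by
    intro a b
    constructor
    · rintro ⟨h1, h2⟩
      rw [Prod.mk.injEq] at h1
      obtain ⟨hb, ha⟩ := h1
      subst hb; subst ha
      exact ⟨rfl, h2⟩
    · rintro ⟨h1, h2⟩
      rw [Prod.mk.injEq] at h1
      obtain ⟨ha, hb⟩ := h1
      subst ha; subst hb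
      exact ⟨rfl, h2⟩
  simp only [hc]
  exact stmt17_sumB v M l k (l < k)

lemma stmt17_smulCancel {c : ℂ} (hc : c ≠ 0) {x y : A} (h : c • x = c • y) : x = y := by
  have h2 := congrArg (fun z : A => c⁻¹ • z) h
  simpa [smul_smul, inv_mul_cancel₀ hc] using h2

lemma stmt17_smulInv {c : ℂ} (hc : c ≠ 0) {x y : A} (h : x = c • y) : y = c⁻¹ • x := by
  rw [h, smul_smul, inv_mul_cancel₀ hc, one_smul]

end Sums

variable [Ring A] [Algebra ℂ A]

lemma stmt17_conjInv (k kinv a : A) (c : ℂ) (h1 : k * kinv = 1) (h2 : kinv * k = 1)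
    (h : k * a = c • (a * k)) : a * kinv = c • (kinv * a) := by
  calc a * kinv = kinv * k * a * kinv := by rw [h2, one_mul]
    _ = kinv * (k * a) * kinv := by rw [mul_assoc kinv k a]
    _ = kinv * (c • (a * k)) * kinv := by rw [h]
    _ = c • (kinv * a) := by
        rw [mul_smul_comm, smul_mul_assoc, mul_assoc, mul_assoc, h1, mul_one]

lemma stmt17_serre (r s t u : ℂ) (hst : s * t = 1) (e f g : A)
    (h1 : f * e = t • (e * f) + (u - t) • g)
    (h2 : e * g = r • (g * e))
    (h3 : g * f = r • (f * g)) :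
    (e * e * f - (r + s) • (e * f * e) + (r * s) • (f * (e * e)) = 0) ∧
    (e * (f * f) - (r + s) • (f * e * f) + (r * s) • (f * f * e) = 0) := by
  have hefe : e * f * e = t • (e * e * f) + ((u - t) * r) • (g * e) := by
    calc e * f * e = e * (f * e) := by rw [mul_assoc]
      _ = t • (e * (e * f)) + (u - t) • (e * g) := by
          rw [h1, mul_add, mul_smul_comm, mul_smul_comm]
      _ = t • (e * e * f) + ((u - t) * r) • (g * e) := by
          rw [h2, smul_smul, mul_assoc]
  have hfee : f * (e * e) = (t * t) • (e * e * f) + (t * ((u - t) * r) + (u - t)) • (g * e) := by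
    calc f * (e * e) = (f * e) * e := by rw [mul_assoc]
      _ = t • (e * f * e) + (u - t) • (g * e) := by
          rw [h1, add_mul, smul_mul_assoc, smul_mul_assoc]
      _ = (t * t) • (e * e * f) + (t * ((u - t) * r) + (u - t)) • (g * e) := by
          rw [hefe]; module
  have hfef : f * e * f = t • (e * (f * f)) + ((u - t) * r) • (f * g) := by
    calc f * e * f = (t • (e * f) + (u - t) • g) * f := by rw [h1]
      _ = t • (e * f * f) + (u - t) • (g * f) := by
          rw [add_mul, smul_mul_assoc, smul_mul_assoc]
      _ = t • (e * (f * f)) + ((u - t) * r) • (f * g) := by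
          rw [h3, smul_smul, mul_assoc]
  have hffe : f * f * e = (t * t) • (e * (f * f)) + (t * ((u - t) * r) + (u - t)) • (f * g) := by
    calc f * f * e = f * (f * e) := by rw [mul_assoc]
      _ = t • (f * (e * f)) + (u - t) • (f * g) := by
          rw [h1, mul_add, mul_smul_comm, mul_smul_comm]
      _ = t • (f * e * f) + (u - t) • (f * g) := by rw [mul_assoc]
      _ = (t * t) • (e * (f * f)) + (t * ((u - t) * r) + (u - t)) • (f * g) := by
          rw [hfef]; module
  constructor
  · rw [hefe, hfee]
    match_scalars
    · linear_combination (r * t - 1) * hst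
    · linear_combination ((u - t) * r * r) * hst
  · rw [hfef, hffe]
    match_scalars
    · linear_combination (r * t - 1) * hst
    · linear_combination ((u - t) * r * r) * hst

lemma stmt17_main (r s : ℂ) (hr : r ≠ 0) (hs : s ≠ 0)
    (lp : Fin n → Fin n → A) (kpinv : Fin n → A)
    (hup : ∀ i j : Fin n, j < i → lp i j = 0)
    (hkp : ∀ i, lp i i * kpinv i = 1 ∧ kpinv i * lp i i = 1)
    (hrel : ∀ i j k l : Fin n,
      (if i = j then s else if i < j then r * s else 1) • (lp i k * lp j l)
        + (if i < j then (s - r) • (lp j k * lp i l) else 0)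
      = (if k = l then s else if k < l then r * s else 1) • (lp j l * lp i k)
        + (if l < k then (s - r) • (lp j k * lp i l) else 0)) :
    (∀ i j k : Fin n, i < j → j < k →
      (kpinv j * lp j k) * (kpinv i * lp i j)
        = s⁻¹ • ((kpinv i * lp i j) * (kpinv j * lp j k))
            + (r⁻¹ - s⁻¹) • (kpinv i * lp i k)) ∧
    (∀ i j k : Fin n, i < j → j < k →
      (kpinv i * lp i j) * (kpinv i * lp i k) = r • ((kpinv i * lp i k) * (kpinv i * lp i j))) ∧
    (∀ i j k : Fin n, i < j → j < k →
      (kpinv i * lp i k) * (kpinv j * lp j k) = r • ((kpinv j * lp j k) * (kpinv i * lp i k))) ∧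
    (∀ i i' j j' : Fin n, i < i' → i' < j → j < j' →
      (kpinv i * lp i i') * (kpinv j * lp j j')
        = (kpinv j * lp j j') * (kpinv i * lp i i')) := by
  -- row relation: k_i a_{ij} = r (a_{ij} k_i)
  have A1 : ∀ i j : Fin n, i < j → lp i i * lp i j = r • (lp i j * lp i i) := by
    intro i j hij
    have h := hrel i i i j
    simp [hij, hij.ne, lt_asymm hij] at h
    apply stmt17_smulCancel hs
    rw [h, smul_smul, mul_comm s r]
  -- column relation: k_j a_{ij} = s (a_{ij} k_j)
  have A2 : ∀ i j : Fin n, i < j → lp j j * lp i j = s • (lp i j * lp j j) := by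
    intro i j hij
    have h := hrel i j j j
    simp [hij, hij.ne, lt_asymm hij] at h
    apply stmt17_smulCancel hr
    rw [smul_smul]
    linear_combination (norm := module) -h
  -- k_i k_j = k_j k_i
  have A3 : ∀ i j : Fin n, i < j → lp i i * lp j j = lp j j * lp i i := by
    intro i j hij
    have h := hrel i j i j
    simp [hij, hij.ne, lt_asymm hij, hup j i hij] at h
    exact stmt17_smulCancel (mul_ne_zero hr hs) h
  -- k_i a_{jk} = a_{jk} k_i
  have A4 : ∀ i j k : Fin n, i < j → j < k → lp i i * lp j k = lp j k * lp i i := by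
    intro i j k hij hjk
    have hik := hij.trans hjk
    have h := hrel i j i k
    simp [hij, hij.ne, lt_asymm hij, hik, hik.ne, lt_asymm hik, hup j i hij] at h
    exact stmt17_smulCancel (mul_ne_zero hr hs) h
  -- a_{ij} k_k = k_k a_{ij}
  have A5 : ∀ i j k : Fin n, i < j → j < k → lp i j * lp k k = lp k k * lp i j := by
    intro i j k hij hjk
    have hik := hij.trans hjk
    have h := hrel i k j k
    simp [hjk, hjk.ne, lt_asymm hjk, hik, hik.ne, lt_asymm hik, hup k j hjk] at h
    exact stmt17_smulCancel (mul_ne_zero hr hs) h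
  -- k_j a_{ik} = (rs) (a_{ik} k_j)
  have A6 : ∀ i j k : Fin n, i < j → j < k → lp j j * lp i k = (r * s) • (lp i k * lp j j) := by
    intro i j k hij hjk
    have h := hrel j i j k
    simp [hjk, hjk.ne, lt_asymm hjk, hij.ne', lt_asymm hij] at h
    exact h
  -- a_{ij} a_{ik} = r (a_{ik} a_{ij})
  have A7 : ∀ i j k : Fin n, i < j → j < k → lp i j * lp i k = r • (lp i k * lp i j) := by
    intro i j k hij hjk
    have hik := hij.trans hjk
    have h := hrel i i j k
    simp [hjk, hjk.ne, lt_asymm hjk] at h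
    apply stmt17_smulCancel hs
    rw [h, smul_smul, mul_comm s r]
  -- a_{jk} a_{ik} = s (a_{ik} a_{jk})
  have A8 : ∀ i j k : Fin n, i < j → j < k → lp j k * lp i k = s • (lp i k * lp j k) := by
    intro i j k hij hjk
    have h := hrel i j k k
    simp [hij, hij.ne, lt_asymm hij] at h
    apply stmt17_smulCancel hr
    rw [smul_smul]
    linear_combination (norm := module) -h
  -- a_{jk} a_{ij} = a_{ij} a_{jk} + (s-r) (a_{ik} k_j)
  have A9 : ∀ i j k : Fin n, i < j → j < k →
      lp j k * lp i j = lp i j * lp j k + (s - r) • (lp i k * lp j j) := by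
    intro i j k hij hjk
    have h := hrel j i k j
    simp [hjk, hjk.ne, hjk.ne', lt_asymm hjk, hij.ne', lt_asymm hij] at h
    exact h
  -- a_{ii'} a_{jj'} = a_{jj'} a_{ii'} for i < i' < j < j'
  have A10 : ∀ i i' j j' : Fin n, i < i' → i' < j → j < j' →
      lp i i' * lp j j' = lp j j' * lp i i' := by
    intro i i' j j' h1 h2 h3
    have hij : i < j := h1.trans h2
    have h := hrel i j i' j'
    have hij' : i' < j' := h2.trans h3
    simp [hij, hij.ne, lt_asymm hij, hij', hij'.ne, lt_asymm hij', hup j i' h2] at h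
    exact stmt17_smulCancel (mul_ne_zero hr hs) h
  -- conjugated forms
  have B1 : ∀ i j : Fin n, i < j → lp i j * kpinv i = r • (kpinv i * lp i j) := fun i j hij =>
    stmt17_conjInv _ _ _ _ (hkp i).1 (hkp i).2 (A1 i j hij)
  have B2 : ∀ i j : Fin n, i < j → lp i j * kpinv j = s • (kpinv j * lp i j) := fun i j hij =>
    stmt17_conjInv _ _ _ _ (hkp j).1 (hkp j).2 (A2 i j hij)
  have B4 : ∀ i j k : Fin n, i < j → j < k → lp j k * kpinv i = kpinv i * lp j k := by
    intro i j k hij hjk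
    have := stmt17_conjInv (lp i i) (kpinv i) (lp j k) 1 (hkp i).1 (hkp i).2
      (by rw [one_smul]; exact A4 i j k hij hjk)
    rwa [one_smul] at this
  have B5 : ∀ i j k : Fin n, i < j → j < k → lp i j * kpinv k = kpinv k * lp i j := by
    intro i j k hij hjk
    have := stmt17_conjInv (lp k k) (kpinv k) (lp i j) 1 (hkp k).1 (hkp k).2
      (by rw [one_smul]; exact (A5 i j k hij hjk).symm)
    rwa [one_smul] at this
  have B6 : ∀ i j k : Fin n, i < j → j < k →
      lp i k * kpinv j = (r * s) • (kpinv j * lp i k) := fun i j k hij hjk =>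
    stmt17_conjInv _ _ _ _ (hkp j).1 (hkp j).2 (A6 i j k hij hjk)
  have KK : ∀ i j : Fin n, i < j → kpinv i * kpinv j = kpinv j * kpinv i := by
    intro i j hij
    have C1 : lp j j * kpinv i = kpinv i * lp j j := by
      have := stmt17_conjInv (lp i i) (kpinv i) (lp j j) 1 (hkp i).1 (hkp i).2
        (by rw [one_smul]; exact A3 i j hij)
      rwa [one_smul] at this
    have := stmt17_conjInv (lp j j) (kpinv j) (kpinv i) 1 (hkp j).1 (hkp j).2
      (by rw [one_smul]; exact C1)
    rwa [one_smul] at this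
  refine ⟨?_, ?_, ?_, ?_⟩
  · -- EFE
    intro i j k hij hjk
    have hik := hij.trans hjk
    have hrs : (r * s) ≠ 0 := mul_ne_zero hr hs
    have step2 : kpinv j * lp i j = s⁻¹ • (lp i j * kpinv j) := stmt17_smulInv hs (B2 i j hij)
    have step6 : kpinv j * lp i k = (r * s)⁻¹ • (lp i k * kpinv j) :=
      stmt17_smulInv hrs (B6 i j k hij hjk)
    have T1 : kpinv i * kpinv j * (lp i j * lp j k)
        = s⁻¹ • ((kpinv i * lp i j) * (kpinv j * lp j k)) := by
      rw [show kpinv i * kpinv j * (lp i j * lp j k)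
          = kpinv i * (kpinv j * lp i j) * lp j k from by noncomm_ring, step2]
      simp only [mul_smul_comm, smul_mul_assoc, mul_assoc]
    have T2 : kpinv i * kpinv j * (lp i k * lp j j) = (r * s)⁻¹ • (kpinv i * lp i k) := by
      rw [show kpinv i * kpinv j * (lp i k * lp j j)
          = kpinv i * (kpinv j * lp i k) * lp j j from by noncomm_ring, step6]
      simp only [mul_smul_comm, smul_mul_assoc, mul_assoc]
      rw [(hkp j).2, mul_one]
    calc (kpinv j * lp j k) * (kpinv i * lp i j)
        = kpinv j * (lp j k * kpinv i) * lp i j := by noncomm_ring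
      _ = kpinv i * kpinv j * (lp j k * lp i j) := by
          rw [B4 i j k hij hjk, show kpinv j * (kpinv i * lp j k) * lp i j
            = kpinv j * kpinv i * (lp j k * lp i j) from by noncomm_ring, ← KK i j hij]
      _ = kpinv i * kpinv j * (lp i j * lp j k)
          + (s - r) • (kpinv i * kpinv j * (lp i k * lp j j)) := by
          rw [A9 i j k hij hjk, mul_add, mul_smul_comm]
      _ = s⁻¹ • ((kpinv i * lp i j) * (kpinv j * lp j k))
          + ((s - r) * (r * s)⁻¹) • (kpinv i * lp i k) := by
          rw [T1, T2, smul_smul]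
      _ = s⁻¹ • ((kpinv i * lp i j) * (kpinv j * lp j k))
          + (r⁻¹ - s⁻¹) • (kpinv i * lp i k) := by
          rw [show (s - r) * (r * s)⁻¹ = r⁻¹ - s⁻¹ from by field_simp]
  · -- EG
    intro i j k hij hjk
    have hik := hij.trans hjk
    have E1 : (kpinv i * lp i j) * (kpinv i * lp i k)
        = (r * r) • (kpinv i * (kpinv i * (lp i k * lp i j))) := by
      rw [show (kpinv i * lp i j) * (kpinv i * lp i k)
          = kpinv i * (lp i j * kpinv i) * lp i k from by noncomm_ring, B1 i j hij]
      simp only [mul_smul_comm, smul_mul_assoc, mul_assoc, smul_smul]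
      rw [A7 i j k hij hjk]
      simp only [mul_smul_comm, smul_smul]
    have E2 : (kpinv i * lp i k) * (kpinv i * lp i j)
        = r • (kpinv i * (kpinv i * (lp i k * lp i j))) := by
      rw [show (kpinv i * lp i k) * (kpinv i * lp i j)
          = kpinv i * (lp i k * kpinv i) * lp i j from by noncomm_ring, B1 i k hik]
      simp only [mul_smul_comm, smul_mul_assoc, mul_assoc]
    rw [E1, E2, smul_smul]
  · -- GF
    intro i j k hij hjk
    have hik := hij.trans hjk
    have G1 : (kpinv i * lp i k) * (kpinv j * lp j k)
        = (r * s) • (kpinv i * (kpinv j * (lp i k * lp j k))) := by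
      rw [show (kpinv i * lp i k) * (kpinv j * lp j k)
          = kpinv i * (lp i k * kpinv j) * lp j k from by noncomm_ring, B6 i j k hij hjk]
      simp only [mul_smul_comm, smul_mul_assoc, mul_assoc]
    have G2 : (kpinv j * lp j k) * (kpinv i * lp i k)
        = s • (kpinv i * (kpinv j * (lp i k * lp j k))) := by
      rw [show (kpinv j * lp j k) * (kpinv i * lp i k)
          = kpinv j * (lp j k * kpinv i) * lp i k from by noncomm_ring, B4 i j k hij hjk,
        show kpinv j * (kpinv i * lp j k) * lp i k
          = kpinv j * kpinv i * (lp j k * lp i k) from by noncomm_ring,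
        ← KK i j hij, A8 i j k hij hjk]
      simp only [mul_smul_comm, mul_assoc]
    rw [G1, G2, smul_smul]
  · -- COMM
    intro i i' j j' h1 h2 h3
    have hij : i < j := h1.trans h2
    calc (kpinv i * lp i i') * (kpinv j * lp j j')
        = kpinv i * (lp i i' * kpinv j) * lp j j' := by noncomm_ring
      _ = kpinv i * kpinv j * (lp i i' * lp j j') := by
          rw [B5 i i' j h1 h2]; noncomm_ring
      _ = kpinv j * kpinv i * (lp j j' * lp i i') := by
          rw [KK i j hij, A10 i i' j j' h1 h2 h3]
      _ = kpinv j * (lp j j' * kpinv i) * lp i i' := by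
          rw [B4 i j j' hij h3]; noncomm_ring
      _ = (kpinv j * lp j j') * (kpinv i * lp i i') := by noncomm_ring

end Stmt17Aux

/-- in `U(R)`, the Gauss components `E_{ij} = (K⁺ᵢ)⁻¹ l⁺_{ij}` of
`L⁺` satisfy the two-parameter Serre relations, commute at distance `> 1`, and
`E_{i+1,i+2} E_{i,i+1} = s⁻¹ E_{i,i+1} E_{i+1,i+2} + (r⁻¹ - s⁻¹) E_{i,i+2}`.
(Only the `L⁺L⁺` RTT relation is needed.) -/
theorem stmt17 {A : Type*} [Ring A] [Algebra ℂ A] (n : ℕ) (r s : ℂ)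
    (hr : r ≠ 0) (hs : s ≠ 0)
    (lp : Fin n → Fin n → A) (kpinv : Fin n → A)
    (hup : ∀ i j : Fin n, j < i → lp i j = 0)
    (hkp : ∀ i, lp i i * kpinv i = 1 ∧ kpinv i * lp i i = 1)
    (hpp : ∀ i j k l : Fin n,
      ∑ a : Fin n, ∑ b : Fin n, Rp n r s (i, j) (a, b) • (lp a k * lp b l)
        = ∑ a : Fin n, ∑ b : Fin n, Rp n r s (a, b) (k, l) • (lp j b * lp i a)) :
    (∀ i j k : Fin n, (j : ℕ) = (i : ℕ) + 1 → (k : ℕ) = (j : ℕ) + 1 →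
      (kpinv i * lp i j) * (kpinv i * lp i j) * (kpinv j * lp j k)
          - (r + s) • ((kpinv i * lp i j) * (kpinv j * lp j k) * (kpinv i * lp i j))
          + (r * s) • ((kpinv j * lp j k) * ((kpinv i * lp i j) * (kpinv i * lp i j)))
        = 0) ∧
    (∀ i j k : Fin n, (j : ℕ) = (i : ℕ) + 1 → (k : ℕ) = (j : ℕ) + 1 →
      (kpinv i * lp i j) * ((kpinv j * lp j k) * (kpinv j * lp j k))
          - (r + s) • ((kpinv j * lp j k) * (kpinv i * lp i j) * (kpinv j * lp j k))
          + (r * s) • ((kpinv j * lp j k) * (kpinv j * lp j k) * (kpinv i * lp i j))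
        = 0) ∧
    (∀ i i' j j' : Fin n, (i' : ℕ) = (i : ℕ) + 1 → (j' : ℕ) = (j : ℕ) + 1 →
      ((i : ℕ) + 1 < (j : ℕ) ∨ (j : ℕ) + 1 < (i : ℕ)) →
      (kpinv i * lp i i') * (kpinv j * lp j j')
        = (kpinv j * lp j j') * (kpinv i * lp i i')) ∧
    (∀ i j k : Fin n, (j : ℕ) = (i : ℕ) + 1 → (k : ℕ) = (j : ℕ) + 1 →
      (kpinv j * lp j k) * (kpinv i * lp i j)
        = s⁻¹ • ((kpinv i * lp i j) * (kpinv j * lp j k))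
            + (r⁻¹ - s⁻¹) • (kpinv i * lp i k)) := by
  have hrel : ∀ i j k l : Fin n,
      (if i = j then s else if i < j then r * s else 1) • (lp i k * lp j l)
        + (if i < j then (s - r) • (lp j k * lp i l) else 0)
      = (if k = l then s else if k < l then r * s else 1) • (lp j l * lp i k)
        + (if l < k then (s - r) • (lp j k * lp i l) else 0) := by
    intro i j k l
    have h := hpp i j k l
    simp only [Rp] at h
    simp only [add_smul, Finset.sum_add_distrib] at h
    rw [stmt17_sumA, stmt17_sumB, stmt17_sumC, stmt17_sumD] at h
    exact h
  obtain ⟨EFE, EG, GF, COMM⟩ := stmt17_main r s hr hs lp kpinv hup hkp hrel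
  have hser : ∀ i j k : Fin n, i < j → j < k →
      ((kpinv i * lp i j) * (kpinv i * lp i j) * (kpinv j * lp j k)
          - (r + s) • ((kpinv i * lp i j) * (kpinv j * lp j k) * (kpinv i * lp i j))
          + (r * s) • ((kpinv j * lp j k) * ((kpinv i * lp i j) * (kpinv i * lp i j)))
        = 0) ∧
      ((kpinv i * lp i j) * ((kpinv j * lp j k) * (kpinv j * lp j k))
          - (r + s) • ((kpinv j * lp j k) * (kpinv i * lp i j) * (kpinv j * lp j k))
          + (r * s) • ((kpinv j * lp j k) * (kpinv j * lp j k) * (kpinv i * lp i j))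
        = 0) := by
    intro i j k hij hjk
    exact stmt17_serre r s s⁻¹ r⁻¹ (mul_inv_cancel₀ hs)
      (kpinv i * lp i j) (kpinv j * lp j k) (kpinv i * lp i k)
      (EFE i j k hij hjk) (EG i j k hij hjk) (GF i j k hij hjk)
  refine ⟨?_, ?_, ?_, ?_⟩
  · intro i j k hj hk
    have hij : i < j := by rw [Fin.lt_def]; omega
    have hjk : j < k := by rw [Fin.lt_def]; omega
    exact (hser i j k hij hjk).1
  · intro i j k hj hk
    have hij : i < j := by rw [Fin.lt_def]; omega
    have hjk : j < k := by rw [Fin.lt_def]; omega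
    exact (hser i j k hij hjk).2
  · intro i i' j j' hi' hj' hcase
    rcases hcase with hc | hc
    · exact COMM i i' j j' (by rw [Fin.lt_def]; omega) (by rw [Fin.lt_def]; omega)
        (by rw [Fin.lt_def]; omega)
    · exact (COMM j j' i i' (by rw [Fin.lt_def]; omega) (by rw [Fin.lt_def]; omega)
        (by rw [Fin.lt_def]; omega)).symm
  · intro i j k hj hk
    exact EFE i j k (by rw [Fin.lt_def]; omega) (by rw [Fin.lt_def]; omega)
end
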